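/- arXiv:2403.09650 — 7 statements merged into one kernel-verified Lean document; each statement's English description precedes it below -/
import Mathlib

section
/- Let $\{u_i\}_{i=0}^{n}$ be any sequence of real numbers with $u_0 = 0$, and let $\lambda_1, \lambda_2 \geq 1$ be real numbers. Then $\sum_{i=1}^{n} |u_i|^{\lambda_1} |u_i - u_{i-1}|^{\lambda_2} \leq \frac{\lambda_2 (n+1)^{\lambda_1}}{\lambda_1 + \lambda_2} \sum_{i=1}^{n} |u_i - u_{i-1}|^{\lambda_1 + \lambda_2}$. -/
/-!
Write `p = l1`, `q = l2` and `d i = |u i - u (i - 1)|`. Since `u 0 = 0`,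
`|u i| ≤ d 1 + ⋯ + d i`, and the power-mean inequality gives
`|u i| ^ p ≤ i ^ (p - 1) * ∑_{j ≤ i} d j ^ p`. Young's inequality splits each product
`d j ^ p * d i ^ q` into `p/(p+q) * d j ^ (p+q) + q/(p+q) * d i ^ (p+q)`. After exchanging
the order of summation, the weight of `d j ^ (p+q)` is controlled by telescoping the
tangent-line bound `p * i ^ (p - 1) ≤ (i + 1) ^ p - i ^ p` of the convex function `x ↦ x ^ p`,
and `q ≥ 1` absorbs what is left.
-/

open Finset Real

theorem norm_le_sum_Icc_norm_sub {E : Type*} [SeminormedAddCommGroup E] {u : ℕ → E}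
    (h0 : u 0 = 0) (i : ℕ) : ‖u i‖ ≤ ∑ j ∈ Icc 1 i, ‖u j - u (j - 1)‖ := by
  induction i with
  | zero => simp [h0]
  | succ k ih =>
    rw [sum_Icc_succ_top (by omega), add_tsub_cancel_right]
    calc ‖u (k + 1)‖ = ‖u k + (u (k + 1) - u k)‖ := by rw [add_sub_cancel]
      _ ≤ ‖u k‖ + ‖u (k + 1) - u k‖ := norm_add_le _ _
      _ ≤ _ := by gcongr

theorem rpow_mul_rpow_le_add_rpow {a b p q : ℝ} (ha : 0 ≤ a) (hb : 0 ≤ b) (hp : 0 < p)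
    (hq : 0 < q) :
    a ^ p * b ^ q ≤ p / (p + q) * a ^ (p + q) + q / (p + q) * b ^ (p + q) := by
  have hpq : p + q ≠ 0 := (add_pos hp hq).ne'
  have h := geom_mean_le_arith_mean2_weighted (w₁ := p / (p + q)) (w₂ := q / (p + q))
    (by positivity) (by positivity) (rpow_nonneg ha (p + q)) (rpow_nonneg hb (p + q))
    (by field_simp)
  rwa [← rpow_mul ha, ← rpow_mul hb, mul_div_cancel₀ _ hpq, mul_div_cancel₀ _ hpq] at h

theorem rpow_sum_mul_rpow_le {ι : Type*} (s : Finset ι) {d : ι → ℝ} (hd : ∀ i, 0 ≤ d i)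
    {p q : ℝ} (hp : 1 ≤ p) (hq : 0 < q) (k : ι) :
    (∑ j ∈ s, d j) ^ p * d k ^ q ≤
      p / (p + q) * (#s : ℝ) ^ (p - 1) * ∑ j ∈ s, d j ^ (p + q)
        + q / (p + q) * (#s : ℝ) ^ p * d k ^ (p + q) := by
  have hp0 : 0 < p := zero_lt_one.trans_le hp
  calc (∑ j ∈ s, d j) ^ p * d k ^ q
      ≤ (#s : ℝ) ^ (p - 1) * ∑ j ∈ s, d j ^ p * d k ^ q := by
        rw [← sum_mul, ← mul_assoc]
        exact mul_le_mul_of_nonneg_right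
          (rpow_sum_le_const_mul_sum_rpow_of_nonneg s hp fun j _ => hd j) (rpow_nonneg (hd k) q)
    _ ≤ (#s : ℝ) ^ (p - 1) *
          ∑ j ∈ s, (p / (p + q) * d j ^ (p + q) + q / (p + q) * d k ^ (p + q)) := by
        gcongr with j
        exact rpow_mul_rpow_le_add_rpow (hd j) (hd k) hp0 hq
    _ = _ := by
        have hcard : (#s : ℝ) ^ (p - 1) * #s = (#s : ℝ) ^ p := by
          rw [← rpow_add_one' (Nat.cast_nonneg _) (by rw [sub_add_cancel]; exact hp0.ne'),
            sub_add_cancel]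
        rw [sum_add_distrib, sum_const, nsmul_eq_mul, ← mul_sum, ← hcard]
        ring

theorem mul_rpow_sub_one_le_add_one_rpow_sub_rpow {p x : ℝ} (hp : 1 ≤ p) (hx : 0 < x) :
    p * x ^ (p - 1) ≤ (x + 1) ^ p - x ^ p := by
  have hBernoulli := one_add_mul_self_le_rpow_one_add (s := x⁻¹) (by linarith [inv_pos.2 hx]) hp
  have hfactor : (x + 1) ^ p = x ^ p * (1 + x⁻¹) ^ p := by
    rw [← mul_rpow hx.le (by positivity), mul_add, mul_one, mul_inv_cancel₀ hx.ne']
  rw [hfactor, rpow_sub_one hx.ne']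
  calc p * (x ^ p / x) = x ^ p * (1 + p * x⁻¹) - x ^ p := by ring
    _ ≤ _ := by gcongr

theorem sum_Icc_mul_rpow_sub_one_le {p : ℝ} (hp : 1 ≤ p) {j m : ℕ} (hj : 0 < j) (hjm : j ≤ m) :
    ∑ i ∈ Icc j m, p * (i : ℝ) ^ (p - 1) ≤ ((m : ℝ) + 1) ^ p - (j : ℝ) ^ p := by
  calc ∑ i ∈ Icc j m, p * (i : ℝ) ^ (p - 1)
      ≤ ∑ i ∈ Icc j m, (((i + 1 : ℕ) : ℝ) ^ p - (i : ℝ) ^ p) := by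
        gcongr with i hi
        push_cast
        exact mul_rpow_sub_one_le_add_one_rpow_sub_rpow hp
          (Nat.cast_pos.2 (hj.trans_le (mem_Icc.1 hi).1))
    _ = _ := by
        rw [sum_Icc_sub hjm (fun i : ℕ => (i : ℝ) ^ p)]
        push_cast
        rfl

-- The coefficient of `d j ^ (p + q)` once the double sum is summed over `i` first.
theorem opial_weight_le {p q : ℝ} (hp : 1 ≤ p) (hq : 1 ≤ q) {j n : ℕ} (hj : 0 < j)
    (hjn : j ≤ n) :
    p / (p + q) * ∑ i ∈ Icc j n, (i : ℝ) ^ (p - 1) + q / (p + q) * (j : ℝ) ^ p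
      ≤ q * ((n : ℝ) + 1) ^ p / (p + q) := by
  have hpq : 0 < p + q := by linarith
  have htelescope := sum_Icc_mul_rpow_sub_one_le hp hj hjn
  rw [← mul_sum] at htelescope
  have hjn' : (j : ℝ) ^ p ≤ ((n : ℝ) + 1) ^ p := by
    gcongr
    exact (Nat.cast_le.2 hjn).trans (le_add_of_nonneg_right zero_le_one)
  rw [div_mul_eq_mul_div, div_mul_eq_mul_div, ← add_div]
  gcongr
  nlinarith [mul_nonneg (sub_nonneg.2 hq) (sub_nonneg.2 hjn')]

theorem sum_rpow_sum_Icc_mul_rpow_le (n : ℕ) {d : ℕ → ℝ} (hd : ∀ i, 0 ≤ d i) {p q : ℝ}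
    (hp : 1 ≤ p) (hq : 1 ≤ q) :
    ∑ i ∈ Icc 1 n, (∑ j ∈ Icc 1 i, d j) ^ p * d i ^ q
      ≤ q * ((n : ℝ) + 1) ^ p / (p + q) * ∑ i ∈ Icc 1 n, d i ^ (p + q) := by
  calc ∑ i ∈ Icc 1 n, (∑ j ∈ Icc 1 i, d j) ^ p * d i ^ q
      ≤ ∑ i ∈ Icc 1 n, (p / (p + q) * (i : ℝ) ^ (p - 1) * ∑ j ∈ Icc 1 i, d j ^ (p + q)
          + q / (p + q) * (i : ℝ) ^ p * d i ^ (p + q)) := by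
        gcongr with i
        simpa using rpow_sum_mul_rpow_le (Icc 1 i) hd hp (by linarith) i
    _ = ∑ j ∈ Icc 1 n, (p / (p + q) * ∑ i ∈ Icc j n, (i : ℝ) ^ (p - 1)
          + q / (p + q) * (j : ℝ) ^ p) * d j ^ (p + q) := by
        simp only [mul_sum, add_mul, sum_add_distrib, sum_mul, mul_assoc]
        congr 1
        exact sum_comm' fun i j => by simp only [mem_Icc]; omega
    _ ≤ ∑ j ∈ Icc 1 n, q * ((n : ℝ) + 1) ^ p / (p + q) * d j ^ (p + q) := by
        gcongr with j hj
        · exact rpow_nonneg (hd j) _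
        · exact opial_weight_le hp hq (mem_Icc.1 hj).1 (mem_Icc.1 hj).2
    _ = _ := (mul_sum _ _ _).symm

theorem discrete_opial_abs
    (n : ℕ) (u : ℕ → ℝ) (l1 l2 : ℝ)
    (hl1 : 1 ≤ l1) (hl2 : 1 ≤ l2)
    (h0 : u 0 = 0) :
    ∑ i ∈ Finset.Icc 1 n, |u i| ^ l1 * |u i - u (i - 1)| ^ l2
      ≤ (l2 * ((n : ℝ) + 1) ^ l1) / (l1 + l2) *
        ∑ i ∈ Finset.Icc 1 n, |u i - u (i - 1)| ^ (l1 + l2) := by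
  calc ∑ i ∈ Icc 1 n, |u i| ^ l1 * |u i - u (i - 1)| ^ l2
      ≤ ∑ i ∈ Icc 1 n, (∑ j ∈ Icc 1 i, |u j - u (j - 1)|) ^ l1 * |u i - u (i - 1)| ^ l2 := by
        gcongr with i
        exact norm_le_sum_Icc_norm_sub h0 i
    _ ≤ _ := sum_rpow_sum_Icc_mul_rpow_le n (fun _ => abs_nonneg _) hl1 hl2
end

section
/- Let $\{u_i\}_{i=n}^{m}$ be a sequence of real numbers with $u_m = 0$, and let $\lambda_1, \lambda_2 \geq 1$ be real numbers. Then $\sum_{i=n}^{m-1} |u_i|^{\lambda_1} |u_i - u_{i-1}|^{\lambda_2} \leq \frac{\lambda_2 (m-n+1)^{\lambda_1}}{\lambda_1 + \lambda_2} \sum_{i=n}^{m} |u_i - u_{i-1}|^{\lambda_1 + \lambda_2}$. -/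
open Finset Real

/-!
Put `a i = |u i - u (i - 1)|`, `p = l₁ + l₂` and let `A i = ∑_{i < j ≤ m} a j` be the tail sums,
so that `|u i| ≤ A i`. Bernoulli's inequality `A^p + p A^(p-1) a ≤ (A + a)^p` telescopes to
`p ∑ A_i^(p-1) a_i ≤ (∑ a_i)^p ≤ N^(p-1) ∑ a_i^p` (power means, `N = m - n + 1`). With
`θ = l₁ / (p - 1)` one has `A^l₁ a^l₂ = (A^(p-1) a)^θ (a^p)^(1-θ)`, so weighted AM-GM termwise
gives `∑ A_i^l₁ a_i^l₂ ≤ N^l₁ p^(-θ) ∑ a_i^p`; finally `p^(1-θ) ≤ 1 + (1-θ)(p-1) = l₂`.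
-/

theorem sum_Ioc_sub_sub_one {M : Type*} [AddCommGroup M] (u : ℤ → M) {i m : ℤ} (him : i ≤ m) :
    ∑ j ∈ Ioc i m, (u j - u (j - 1)) = u m - u i := by
  induction m, him using Int.leInduction with
  | base => simp
  | succ k hik ih =>
    rw [← insert_Ioc_right_eq_Ioc_add_one hik, sum_insert (by simp), ih, add_sub_cancel_right]
    abel

theorem abs_le_sum_Ioc_abs_sub {u : ℤ → ℝ} {i m : ℤ} (him : i ≤ m) (hm : u m = 0) :
    |u i| ≤ ∑ j ∈ Ioc i m, |u j - u (j - 1)| :=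
  calc |u i| = |∑ j ∈ Ioc i m, (u j - u (j - 1))| := by
        rw [sum_Ioc_sub_sub_one u him, hm, zero_sub, abs_neg]
    _ ≤ ∑ j ∈ Ioc i m, |u j - u (j - 1)| := abs_sum_le_sum_abs _ _

theorem rpow_add_mul_rpow_sub_one_mul_le {p x y : ℝ} (hp : 1 ≤ p) (hx : 0 ≤ x) (hy : 0 ≤ y) :
    x ^ p + p * x ^ (p - 1) * y ≤ (x + y) ^ p := by
  rcases hx.eq_or_lt with rfl | hx
  · rcases hp.eq_or_lt with rfl | hp
    · simp
    · simp only [zero_rpow (by linarith : p ≠ 0), zero_rpow (by linarith : p - 1 ≠ 0), mul_zero,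
        zero_mul, zero_add]
      positivity
  · have h := one_add_mul_self_le_rpow_one_add (by linarith [div_nonneg hy hx.le] : -1 ≤ y / x) hp
    calc x ^ p + p * x ^ (p - 1) * y = x ^ p * (1 + p * (y / x)) := by
          rw [rpow_sub_one hx.ne']; field_simp
      _ ≤ x ^ p * (1 + y / x) ^ p := by gcongr
      _ = (x + y) ^ p := by
          rw [← mul_rpow hx.le (by positivity)]; congr 1; field_simp

theorem mul_sum_rpow_sum_Ioc_mul_le {a : ℤ → ℝ} (ha : ∀ i, 0 ≤ a i) {p : ℝ} (hp : 1 ≤ p)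
    (n m : ℤ) :
    p * ∑ i ∈ Icc n m, (∑ j ∈ Ioc i m, a j) ^ (p - 1) * a i ≤ (∑ i ∈ Icc n m, a i) ^ p := by
  rcases le_or_gt n (m + 1) with hn | hn
  · induction n, hn using Int.leInductionDown with
    | base => simp [zero_rpow (by linarith : p ≠ 0)]
    | pred k hk ih =>
      have hB : 0 ≤ ∑ i ∈ Icc k m, a i := sum_nonneg fun i _ => ha i
      rw [← insert_Icc_left_eq_Icc_sub_one (by linarith), sum_insert (by simp),
        sum_insert (by simp), Ioc_sub_one_left_eq_Icc, mul_add, add_comm (a (k - 1))]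
      linarith [rpow_add_mul_rpow_sub_one_mul_le hp hB (ha (k - 1))]
  · simp [Icc_eq_empty_of_lt (by linarith : m < n), zero_rpow (by linarith : p ≠ 0)]

theorem sum_rpow_sum_Ioc_sub_one_mul_le {a : ℤ → ℝ} (ha : ∀ i, 0 ≤ a i) {p : ℝ} (hp : 1 ≤ p)
    (n m : ℤ) :
    ∑ i ∈ Icc n m, (∑ j ∈ Ioc i m, a j) ^ (p - 1) * a i
      ≤ (#(Icc n m) : ℝ) ^ (p - 1) / p * ∑ i ∈ Icc n m, a i ^ p := by
  rw [div_mul_eq_mul_div, le_div_iff₀ (by linarith), mul_comm]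
  exact (mul_sum_rpow_sum_Ioc_mul_le ha hp n m).trans
    (rpow_sum_le_const_mul_sum_rpow_of_nonneg _ hp fun i _ => ha i)

/-- Hölder's inequality with exponents `1/θ` and `1/(1-θ)`, in a normalised form that follows
termwise from weighted AM-GM and so needs no separate treatment of the endpoints `θ = 0, 1`. -/
theorem sum_rpow_mul_rpow_one_sub_le {ι : Type*} {s : Finset ι} {f g : ι → ℝ} {θ c : ℝ}
    (hf : ∀ i ∈ s, 0 ≤ f i) (hg : ∀ i ∈ s, 0 ≤ g i) (hθ₀ : 0 ≤ θ) (hθ₁ : θ ≤ 1) (hc : 0 < c)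
    (hfg : ∑ i ∈ s, f i ≤ c * ∑ i ∈ s, g i) :
    ∑ i ∈ s, f i ^ θ * g i ^ (1 - θ) ≤ c ^ θ * ∑ i ∈ s, g i :=
  calc ∑ i ∈ s, f i ^ θ * g i ^ (1 - θ) = c ^ θ * ∑ i ∈ s, (f i / c) ^ θ * g i ^ (1 - θ) := by
        rw [mul_sum]
        refine sum_congr rfl fun i hi => ?_
        rw [div_rpow (hf i hi) hc.le, ← mul_assoc, mul_div_cancel₀ _ (rpow_pos_of_pos hc θ).ne']
    _ ≤ c ^ θ * ∑ i ∈ s, (θ * (f i / c) + (1 - θ) * g i) := by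
        gcongr with i hi
        exact geom_mean_le_arith_mean2_weighted hθ₀ (by linarith) (div_nonneg (hf i hi) hc.le)
          (hg i hi) (by ring)
    _ = c ^ θ * (θ * ((∑ i ∈ s, f i) / c) + (1 - θ) * ∑ i ∈ s, g i) := by
        rw [sum_add_distrib, ← mul_sum, ← mul_sum, sum_div]
    _ ≤ c ^ θ * ∑ i ∈ s, g i := by
        have hfg' : (∑ i ∈ s, f i) / c ≤ ∑ i ∈ s, g i := by rwa [div_le_iff₀' hc]
        gcongr
        linarith [mul_le_mul_of_nonneg_left hfg' hθ₀]

theorem sum_rpow_sum_Ioc_mul_rpow_le {a : ℤ → ℝ} (ha : ∀ i, 0 ≤ a i) {n m : ℤ} (hnm : n ≤ m)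
    {l₁ l₂ : ℝ} (hl₁ : 0 < l₁) (hl₂ : 1 ≤ l₂) :
    ∑ i ∈ Icc n m, (∑ j ∈ Ioc i m, a j) ^ l₁ * a i ^ l₂
      ≤ l₂ * (#(Icc n m) : ℝ) ^ l₁ / (l₁ + l₂) * ∑ i ∈ Icc n m, a i ^ (l₁ + l₂) := by
  set p := l₁ + l₂
  set N : ℝ := (#(Icc n m) : ℝ)
  set θ := l₁ / (p - 1)
  have hp : 1 < p := by linarith
  have hN : 0 < N := Nat.cast_pos.2 (card_pos.2 (nonempty_Icc.2 hnm))
  have hθ₀ : 0 ≤ θ := div_nonneg hl₁.le (by linarith)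
  have hθ₁ : θ ≤ 1 := (div_le_one (by linarith)).2 (by linarith)
  have hpθ : (p - 1) * θ = l₁ := mul_div_cancel₀ _ (by linarith)
  have hA : ∀ i, 0 ≤ ∑ j ∈ Ioc i m, a j := fun i => sum_nonneg fun j _ => ha j
  have hsplit : ∀ i, (∑ j ∈ Ioc i m, a j) ^ l₁ * a i ^ l₂
      = ((∑ j ∈ Ioc i m, a j) ^ (p - 1) * a i) ^ θ * (a i ^ p) ^ (1 - θ) := by
    intro i
    have hexp : θ + p * (1 - θ) = l₂ := by linear_combination (-1 : ℝ) * hpθ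
    rw [mul_rpow (rpow_nonneg (hA i) _) (ha i), ← rpow_mul (hA i), hpθ, ← rpow_mul (ha i),
      mul_assoc, ← rpow_add' (ha i) (by linarith), hexp]
  have hconst : N ^ l₁ / p ^ θ ≤ l₂ * N ^ l₁ / p := by
    have hbern : p ^ (1 - θ) ≤ l₂ := by
      have := rpow_one_add_le_one_add_mul_self (p := 1 - θ) (by linarith : -1 ≤ p - 1)
        (by linarith) (by linarith)
      rwa [add_sub_cancel,
        show 1 + (1 - θ) * (p - 1) = l₂ by linear_combination (-1 : ℝ) * hpθ] at this
    rw [div_le_div_iff₀ (rpow_pos_of_pos (by linarith) θ) (by linarith)]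
    calc N ^ l₁ * p = N ^ l₁ * (p ^ θ * p ^ (1 - θ)) := by
          rw [← rpow_add (by linarith), add_sub_cancel, rpow_one]
      _ ≤ N ^ l₁ * (p ^ θ * l₂) := by gcongr
      _ = l₂ * N ^ l₁ * p ^ θ := by ring
  calc ∑ i ∈ Icc n m, (∑ j ∈ Ioc i m, a j) ^ l₁ * a i ^ l₂
      = ∑ i ∈ Icc n m, ((∑ j ∈ Ioc i m, a j) ^ (p - 1) * a i) ^ θ * (a i ^ p) ^ (1 - θ) :=
        sum_congr rfl fun i _ => hsplit i
    _ ≤ (N ^ (p - 1) / p) ^ θ * ∑ i ∈ Icc n m, a i ^ p :=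
        sum_rpow_mul_rpow_one_sub_le (fun i _ => mul_nonneg (rpow_nonneg (hA i) _) (ha i))
          (fun i _ => rpow_nonneg (ha i) _) hθ₀ hθ₁ (by positivity)
          (sum_rpow_sum_Ioc_sub_one_mul_le ha hp.le n m)
    _ = N ^ l₁ / p ^ θ * ∑ i ∈ Icc n m, a i ^ p := by
        rw [div_rpow (by positivity) (by linarith), ← rpow_mul hN.le, hpθ]
    _ ≤ l₂ * N ^ l₁ / p * ∑ i ∈ Icc n m, a i ^ p := by
        gcongr
        exact sum_nonneg fun i _ => rpow_nonneg (ha i) _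

theorem discrete_opial_abs_backward
    (n m : ℤ) (u : ℤ → ℝ) (l1 l2 : ℝ)
    (hnm : n ≤ m)
    (hl1 : 1 ≤ l1) (hl2 : 1 ≤ l2)
    (hm : u m = 0) :
    ∑ i ∈ Finset.Icc n (m - 1), |u i| ^ l1 * |u i - u (i - 1)| ^ l2
      ≤ (l2 * ((m : ℝ) - (n : ℝ) + 1) ^ l1) / (l1 + l2) *
        ∑ i ∈ Finset.Icc n m, |u i - u (i - 1)| ^ (l1 + l2) := by
  have hcard : (#(Icc n m) : ℝ) = m - n + 1 := by
    rw [Int.card_Icc, ← Int.cast_natCast, Int.toNat_of_nonneg (by linarith)]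
    push_cast
    ring
  calc ∑ i ∈ Icc n (m - 1), |u i| ^ l1 * |u i - u (i - 1)| ^ l2
      ≤ ∑ i ∈ Icc n (m - 1), (∑ j ∈ Ioc i m, |u j - u (j - 1)|) ^ l1 * |u i - u (i - 1)| ^ l2 := by
        gcongr with i hi
        exact abs_le_sum_Ioc_abs_sub (by linarith [(mem_Icc.1 hi).2]) hm
    _ ≤ ∑ i ∈ Icc n m, (∑ j ∈ Ioc i m, |u j - u (j - 1)|) ^ l1 * |u i - u (i - 1)| ^ l2 :=
        sum_le_sum_of_subset_of_nonneg (Icc_subset_Icc_right (by linarith))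
          fun _ _ _ => by positivity
    _ ≤ _ := sum_rpow_sum_Ioc_mul_rpow_le (fun i => abs_nonneg _) hnm (by linarith) hl2
    _ = _ := by rw [hcard]
end

section
/- Let $\{u_i\}_{i=0}^{n}$ be a sequence of closed bounded intervals with $u_0 = [0,0]$, and let $\lambda_1, \lambda_2 \geq 1$ be natural numbers. If the sequences of lower endpoints $\underline{u_i}$ and upper endpoints $\overline{u_i}$ are both non-decreasing (so each $u_i \subseteq [0,\infty)$ componentwise increasing from $0$), and the length $\overline{u_i} - \underline{u_i}$ is non-decreasing in $i$, then $\sum_{i=1}^{n} \max\{|\underline{u_i}^{\lambda_1} (\underline{u_i} - \underline{u_{i-1}})^{\lambda_2}|, |\overline{u_i}^{\lambda_1} (\overline{u_i} - \overline{u_{i-1}})^{\lambda_2}|\} \leq \frac{\lambda_2 (n+1)^{\lambda_1}}{\lambda_1 + \lambda_2} \sum_{i=1}^{n} \big(\max\{|\underline{u_i} - \underline{u_{i-1}}|, |\overline{u_i} - \overline{u_{i-1}}|\}\big)^{\lambda_1 + \lambda_2}$. -/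
/-!
Because the lower endpoints start at `0` and the widths do not decrease, `0 ≤ lo i ≤ hi i` and
`0 ≤ Δ lo i ≤ Δ hi i`, so both maxima are attained at the upper endpoints and the claim becomes
the discrete Opial inequality for the single non-decreasing sequence `hi` with `hi 0 = 0`.
That inequality goes by induction on `n`. Writing `hi (n+1)` as the sum of its `n + 1`
increments, the power-mean inequality and Young's inequality
`(p + q) x^p y^q ≤ p x^(p+q) + q y^(p+q)` bound the new term by
`(n+1)^(p-1) (p ∑ (Δ hi)^(p+q) + (n+1) q (Δ hi (n+1))^(p+q)) / (p + q)`, and Bernoulli's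
inequality `N^p + p N^(p-1) ≤ (N+1)^p` shows the constant `q (n+1)^p / (p + q)` grows enough
to absorb it.
-/

open Finset

theorem young_inequality_pow {x y : ℝ} (hx : 0 ≤ x) (hy : 0 ≤ y) (p q : ℕ) :
    ((p + q : ℕ) : ℝ) * (x ^ p * y ^ q) ≤ p * x ^ (p + q) + q * y ^ (p + q) := by
  rcases Nat.eq_zero_or_pos (p + q) with hpq | hpq
  · obtain ⟨rfl, rfl⟩ : p = 0 ∧ q = 0 := by omega
    simp
  have hP : (0 : ℝ) < (p + q : ℕ) := by exact_mod_cast hpq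
  have hrpow : ∀ {z : ℝ} (m : ℕ), 0 ≤ z → (z ^ (p + q)) ^ ((m : ℝ) / (p + q : ℕ)) = z ^ m := by
    intro z m hz
    rw [← Real.rpow_natCast z (p + q), ← Real.rpow_mul hz, mul_div_cancel₀ _ hP.ne',
      Real.rpow_natCast]
  have amgm := Real.geom_mean_le_arith_mean2_weighted (p₁ := x ^ (p + q)) (p₂ := y ^ (p + q))
    (div_nonneg p.cast_nonneg hP.le) (div_nonneg q.cast_nonneg hP.le) (by positivity)
    (by positivity) (by rw [← add_div, ← Nat.cast_add, div_self hP.ne'])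
  rw [hrpow p hx, hrpow q hy] at amgm
  calc ((p + q : ℕ) : ℝ) * (x ^ p * y ^ q)
      ≤ ((p + q : ℕ) : ℝ) * (p / (p + q : ℕ) * x ^ (p + q) + q / (p + q : ℕ) * y ^ (p + q)) := by
        gcongr
    _ = p * x ^ (p + q) + q * y ^ (p + q) := by field_simp

theorem pow_succ_add_mul_le_add_pow_succ {x y : ℝ} (hx : 0 ≤ x) (hy : 0 ≤ y) (m : ℕ) :
    x ^ (m + 1) + (m + 1) * x ^ m * y ≤ (x + y) ^ (m + 1) := by
  induction m with
  | zero => simp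
  | succ m ih =>
    have hxy : 0 ≤ x + y := add_nonneg hx hy
    calc x ^ (m + 2) + ((m + 1 : ℕ) + 1) * x ^ (m + 1) * y
        ≤ (x ^ (m + 1) + (m + 1) * x ^ m * y) * (x + y) := by
          have expand : (x ^ (m + 1) + (m + 1) * x ^ m * y) * (x + y)
              = x ^ (m + 2) + ((m + 1 : ℕ) + 1) * x ^ (m + 1) * y + (m + 1) * x ^ m * y ^ 2 := by
            push_cast; ring
          rw [expand]
          have : 0 ≤ ((m : ℝ) + 1) * x ^ m * y ^ 2 := by positivity
          linarith
      _ ≤ (x + y) ^ (m + 2) := by rw [pow_succ (x + y) (m + 1)]; gcongr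

theorem sum_Icc_sub_pred (b : ℕ → ℝ) (n : ℕ) :
    ∑ i ∈ Icc 1 n, (b i - b (i - 1)) = b n - b 0 := by
  induction n with
  | zero => simp
  | succ n ih => rw [sum_Icc_succ_top (by omega), ih, Nat.add_sub_cancel]; ring

theorem apply_zero_le_of_le_succ {b : ℕ → ℝ} {n : ℕ} (h : ∀ i < n, b i ≤ b (i + 1)) :
    ∀ i ≤ n, b 0 ≤ b i := by
  intro i hi
  induction i with
  | zero => rfl
  | succ i ih => exact (ih (by omega)).trans (h i (by omega))

theorem sum_pow_mul_pow_le {ι : Type*} {s : Finset ι} {f : ι → ℝ} (hf : ∀ i ∈ s, 0 ≤ f i)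
    {t : ℝ} (ht : 0 ≤ t) (k q : ℕ) :
    ((k + 1 + q : ℕ) : ℝ) * ((∑ i ∈ s, f i) ^ (k + 1) * t ^ q)
      ≤ (#s : ℝ) ^ k * ((k + 1 : ℕ) * ∑ i ∈ s, f i ^ (k + 1 + q) + #s * q * t ^ (k + 1 + q)) := by
  have young : ∀ i ∈ s, ((k + 1 + q : ℕ) : ℝ) * (f i ^ (k + 1) * t ^ q)
      ≤ (k + 1 : ℕ) * f i ^ (k + 1 + q) + q * t ^ (k + 1 + q) :=
    fun i hi => young_inequality_pow (hf i hi) ht (k + 1) q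
  calc ((k + 1 + q : ℕ) : ℝ) * ((∑ i ∈ s, f i) ^ (k + 1) * t ^ q)
      ≤ ((k + 1 + q : ℕ) : ℝ) * (((#s : ℝ) ^ k * ∑ i ∈ s, f i ^ (k + 1)) * t ^ q) := by
        gcongr
        exact pow_sum_le_card_mul_sum_pow hf k
    _ = (#s : ℝ) ^ k * ∑ i ∈ s, ((k + 1 + q : ℕ) : ℝ) * (f i ^ (k + 1) * t ^ q) := by
        simp only [mul_sum, sum_mul]
        exact sum_congr rfl fun i _ => by ring
    _ ≤ (#s : ℝ) ^ k * ∑ i ∈ s, ((k + 1 : ℕ) * f i ^ (k + 1 + q) + q * t ^ (k + 1 + q)) := by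
        gcongr with i hi
        exact young i hi
    _ = _ := by rw [sum_add_distrib, ← mul_sum, sum_const, nsmul_eq_mul]; ring

theorem opial_discrete {b : ℕ → ℝ} (hb0 : b 0 = 0) {p q : ℕ} (hp : 1 ≤ p) (hq : 1 ≤ q) (n : ℕ)
    (hmono : ∀ i < n, b i ≤ b (i + 1)) :
    ((p + q : ℕ) : ℝ) * ∑ i ∈ Icc 1 n, b i ^ p * (b i - b (i - 1)) ^ q
      ≤ q * ((n : ℝ) + 1) ^ p * ∑ i ∈ Icc 1 n, (b i - b (i - 1)) ^ (p + q) := by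
  obtain ⟨k, rfl⟩ : ∃ k, p = k + 1 := ⟨p - 1, by omega⟩
  induction n with
  | zero => simp
  | succ n ih =>
    have hd : ∀ i ∈ Icc 1 (n + 1), 0 ≤ b i - b (i - 1) := by
      intro i hi
      obtain ⟨j, rfl⟩ : ∃ j, i = j + 1 := ⟨i - 1, by grind⟩
      simpa using hmono j (by grind)
    have ht : 0 ≤ b (n + 1) - b n := by simpa using hd (n + 1) (by simp)
    have hb : b (n + 1) = ∑ i ∈ Icc 1 (n + 1), (b i - b (i - 1)) := by
      rw [sum_Icc_sub_pred, hb0, sub_zero]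
    set N : ℝ := (n : ℝ) + 1
    set T := ∑ i ∈ Icc 1 n, (b i - b (i - 1)) ^ (k + 1 + q)
    set t := b (n + 1) - b n
    have hT : 0 ≤ T :=
      sum_nonneg fun i hi => pow_nonneg (hd i (Icc_subset_Icc_right n.le_succ hi)) _
    have hnew : ((k + 1 + q : ℕ) : ℝ) * (b (n + 1) ^ (k + 1) * t ^ q)
        ≤ N ^ k * ((k + 1 : ℕ) * (T + t ^ (k + 1 + q)) + N * q * t ^ (k + 1 + q)) := by
      have := sum_pow_mul_pow_le hd ht k q
      rwa [← hb, Nat.card_Icc, Nat.add_sub_cancel, sum_Icc_succ_top (by omega),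
        Nat.add_sub_cancel, Nat.cast_succ] at this
    have hcoeff : N ^ k * (k + 1 : ℕ) + q * N ^ (k + 1) ≤ q * (N + 1) ^ (k + 1) := by
      have hq' : (1 : ℝ) ≤ q := by exact_mod_cast hq
      calc N ^ k * (k + 1 : ℕ) + q * N ^ (k + 1)
          ≤ q * (N ^ k * (k + 1 : ℕ)) + q * N ^ (k + 1) :=
            add_le_add_left (le_mul_of_one_le_left (by positivity) hq') _
        _ = q * (N ^ (k + 1) + (k + 1) * N ^ k * 1) := by push_cast; ring
        _ ≤ q * (N + 1) ^ (k + 1) := by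
            gcongr
            exact pow_succ_add_mul_le_add_pow_succ (by positivity) zero_le_one k
    have hprev := ih fun i hi => hmono i (by omega)
    rw [sum_Icc_succ_top (by omega), sum_Icc_succ_top (by omega), Nat.add_sub_cancel,
      Nat.cast_succ]
    calc ((k + 1 + q : ℕ) : ℝ) * (∑ i ∈ Icc 1 n, b i ^ (k + 1) * (b i - b (i - 1)) ^ q
            + b (n + 1) ^ (k + 1) * t ^ q)
        ≤ q * N ^ (k + 1) * T
            + N ^ k * ((k + 1 : ℕ) * (T + t ^ (k + 1 + q)) + N * q * t ^ (k + 1 + q)) := by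
          rw [mul_add]
          exact add_le_add hprev hnew
      _ = (N ^ k * (k + 1 : ℕ) + q * N ^ (k + 1)) * (T + t ^ (k + 1 + q)) := by ring
      _ ≤ q * (N + 1) ^ (k + 1) * (T + t ^ (k + 1 + q)) := by gcongr

theorem max_abs_pow_mul_pow_le {a b c d : ℝ} (ha : 0 ≤ a) (hab : a ≤ b) (hc : 0 ≤ c)
    (hcd : c ≤ d) (p q : ℕ) : max |a ^ p * c ^ q| |b ^ p * d ^ q| ≤ b ^ p * d ^ q := by
  have hb : 0 ≤ b := ha.trans hab
  have hd : 0 ≤ d := hc.trans hcd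
  rw [abs_of_nonneg (by positivity), abs_of_nonneg (by positivity)]
  exact max_le (by gcongr) le_rfl

theorem interval_opial_increasing
    (n : ℕ) (lo hi : ℕ → ℝ) (l1 l2 : ℕ)
    (hl1 : 1 ≤ l1) (hl2 : 1 ≤ l2)
    (hvalid : ∀ i ≤ n, lo i ≤ hi i)
    (h0lo : lo 0 = 0) (h0hi : hi 0 = 0)
    (hlo : ∀ i < n, lo i ≤ lo (i + 1))
    (hhi : ∀ i < n, hi i ≤ hi (i + 1))
    (hlen : ∀ i < n, hi i - lo i ≤ hi (i + 1) - lo (i + 1)) :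
    ∑ i ∈ Finset.Icc 1 n,
        max |(lo i) ^ l1 * (lo i - lo (i - 1)) ^ l2|
            |(hi i) ^ l1 * (hi i - hi (i - 1)) ^ l2|
      ≤ ((l2 : ℝ) * ((n : ℝ) + 1) ^ l1) / ((l1 : ℝ) + (l2 : ℝ)) *
        ∑ i ∈ Finset.Icc 1 n,
          (max |lo i - lo (i - 1)| |hi i - hi (i - 1)|) ^ (l1 + l2) := by
  have hlo_nonneg : ∀ i ≤ n, 0 ≤ lo i := h0lo ▸ apply_zero_le_of_le_succ hlo
  have hsteps : ∀ i ∈ Icc 1 n,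
      0 ≤ lo i - lo (i - 1) ∧ lo i - lo (i - 1) ≤ hi i - hi (i - 1) := by
    intro i hmem
    obtain ⟨j, rfl⟩ : ∃ j, i = j + 1 := ⟨i - 1, by grind⟩
    have := hlo j (by grind)
    have := hlen j (by grind)
    simp only [Nat.add_sub_cancel]
    constructor <;> linarith
  have hopial := opial_discrete h0hi hl1 hl2 n hhi
  push_cast at hopial
  calc ∑ i ∈ Icc 1 n,
        max |lo i ^ l1 * (lo i - lo (i - 1)) ^ l2| |hi i ^ l1 * (hi i - hi (i - 1)) ^ l2|
      ≤ ∑ i ∈ Icc 1 n, hi i ^ l1 * (hi i - hi (i - 1)) ^ l2 := by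
        refine sum_le_sum fun i hmem => ?_
        have hin : i ≤ n := (mem_Icc.mp hmem).2
        exact max_abs_pow_mul_pow_le (hlo_nonneg i hin) (hvalid i hin) (hsteps i hmem).1
          (hsteps i hmem).2 l1 l2
    _ ≤ (l2 * ((n : ℝ) + 1) ^ l1) / (l1 + l2) *
          ∑ i ∈ Icc 1 n, (hi i - hi (i - 1)) ^ (l1 + l2) := by
        rw [div_mul_eq_mul_div, le_div_iff₀ (by positivity)]
        linarith
    _ ≤ (l2 * ((n : ℝ) + 1) ^ l1) / (l1 + l2) *
          ∑ i ∈ Icc 1 n, (max |lo i - lo (i - 1)| |hi i - hi (i - 1)|) ^ (l1 + l2) := by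
        gcongr with i hmem
        · exact (hsteps i hmem).1.trans (hsteps i hmem).2
        · exact le_max_of_le_right (le_abs_self _)
end

section
/- Let $\{u_i\}_{i=0}^{n}$ and $\{v_i\}_{i=0}^{n}$ be sequences of closed bounded intervals with $u_0 = v_0 = [0,0]$, such that all endpoint sequences $\underline{u_i}, \overline{u_i}, \underline{v_i}, \overline{v_i}$ are non-decreasing and the lengths $\mathrm{len}(u_i)$ and $\mathrm{len}(v_i)$ are non-decreasing. Then for each $1 \le i \le n$, the Leibniz-type identity $u_{i-1} \cdot \nabla v_i + v_i \cdot \nabla u_i = \nabla(u_i v_i)$ holds, where $\nabla w_i = w_i \ominus_g w_{i-1}$ denotes the backward gH-difference and $\cdot$ is interval multiplication. -/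
/-!
With nonnegative intervals whose lower endpoints and lengths increase, both the gH-differences
and all the products reduce to endpoint formulas, `[a, b] ⊖_g [c, d] = [a - c, b - d]` and
`[a, b] · [c, d] = [a c, b d]`; the identity is then the scalar Leibniz rule
`x' y' - x y = x (y' - y) + y' (x' - x)` applied to each endpoint separately.
-/

/-- gH-difference of intervals given by endpoint pairs. -/
def gH (u v : ℝ × ℝ) : ℝ × ℝ :=
  (min (u.1 - v.1) (u.2 - v.2), max (u.1 - v.1) (u.2 - v.2))

/-- Interval multiplication. -/
def imul (u v : ℝ × ℝ) : ℝ × ℝ :=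
  (min (min (u.1 * v.1) (u.1 * v.2)) (min (u.2 * v.1) (u.2 * v.2)),
   max (max (u.1 * v.1) (u.1 * v.2)) (max (u.2 * v.1) (u.2 * v.2)))

/-- Minkowski addition of intervals. -/
def iadd (u v : ℝ × ℝ) : ℝ × ℝ := (u.1 + v.1, u.2 + v.2)

lemma imul_of_nonneg {a b c d : ℝ} (ha : 0 ≤ a) (hab : a ≤ b) (hc : 0 ≤ c) (hcd : c ≤ d) :
    imul (a, b) (c, d) = (a * c, b * d) := by
  have hac_ad : a * c ≤ a * d := mul_le_mul_of_nonneg_left hcd ha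
  have hac_bc : a * c ≤ b * c := mul_le_mul_of_nonneg_right hab hc
  have had_bd : a * d ≤ b * d := mul_le_mul_of_nonneg_right hab (hc.trans hcd)
  have hbc_bd : b * c ≤ b * d := mul_le_mul_of_nonneg_left hcd (ha.trans hab)
  simp only [imul, min_eq_left hac_ad, min_eq_left hbc_bd, min_eq_left hac_bc,
    max_eq_right hac_ad, max_eq_right hbc_bd, max_eq_right had_bd]

lemma gH_of_sub_le_sub {a b c d : ℝ} (h : a - c ≤ b - d) : gH (a, b) (c, d) = (a - c, b - d) := by
  simp only [gH, min_eq_left h, max_eq_right h]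

theorem iadd_imul_gH_eq_gH_imul {a b c d a' b' c' d' : ℝ}
    (ha : 0 ≤ a) (hab : a ≤ b) (hc : 0 ≤ c) (hcd : c ≤ d) (haa' : a ≤ a') (hcc' : c ≤ c')
    (hlen_u : b - a ≤ b' - a') (hlen_v : d - c ≤ d' - c') :
    iadd (imul (a, b) (gH (c', d') (c, d))) (imul (c', d') (gH (a', b') (a, b)))
      = gH (imul (a', b') (c', d')) (imul (a, b) (c, d)) := by
  have hΔu : a' - a ≤ b' - b := by linarith
  have hΔv : c' - c ≤ d' - d := by linarith
  have hc' : 0 ≤ c' := hc.trans hcc'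
  have hprod : a' * c' - a * c ≤ b' * d' - b * d := by
    have hlo : a' * c' - a * c = a * (c' - c) + c' * (a' - a) := by ring
    have hhi : b' * d' - b * d = b * (d' - d) + d' * (b' - b) := by ring
    rw [hlo, hhi]
    gcongr
    · linarith
    · linarith
    · linarith
  rw [gH_of_sub_le_sub hΔu, gH_of_sub_le_sub hΔv,
    imul_of_nonneg ha hab (by linarith) hΔv, imul_of_nonneg hc' (by linarith) (by linarith) hΔu,
    imul_of_nonneg (by linarith) (by linarith) hc' (by linarith), imul_of_nonneg ha hab hc hcd,
    gH_of_sub_le_sub hprod]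
  simp only [iadd, Prod.mk.injEq]
  constructor <;> ring

lemma apply_zero_le_of_le_succ_s8 {α : Type*} [Preorder α] {f : ℕ → α} {n : ℕ}
    (hf : ∀ i < n, f i ≤ f (i + 1)) {i : ℕ} (hi : i ≤ n) : f 0 ≤ f i := by
  induction i with
  | zero => exact le_rfl
  | succ i ih => exact (ih (by omega)).trans (hf i hi)

theorem interval_leibniz_identity_general
    (n : ℕ) (ulo uhi vlo vhi : ℕ → ℝ)
    (huvalid : ∀ i ≤ n, ulo i ≤ uhi i)
    (hvvalid : ∀ i ≤ n, vlo i ≤ vhi i)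
    (hu0 : ulo 0 = 0 ∧ uhi 0 = 0) (hv0 : vlo 0 = 0 ∧ vhi 0 = 0)
    (hulo : ∀ i < n, ulo i ≤ ulo (i + 1))
    (hvlo : ∀ i < n, vlo i ≤ vlo (i + 1))
    (hulen : ∀ i < n, uhi i - ulo i ≤ uhi (i + 1) - ulo (i + 1))
    (hvlen : ∀ i < n, vhi i - vlo i ≤ vhi (i + 1) - vlo (i + 1)) :
    ∀ i, 1 ≤ i → i ≤ n →
      iadd (imul (ulo (i - 1), uhi (i - 1)) (gH (vlo i, vhi i) (vlo (i - 1), vhi (i - 1))))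
           (imul (vlo i, vhi i) (gH (ulo i, uhi i) (ulo (i - 1), uhi (i - 1))))
        = gH (imul (ulo i, uhi i) (vlo i, vhi i))
             (imul (ulo (i - 1), uhi (i - 1)) (vlo (i - 1), vhi (i - 1))) := by
  intro i hi hin
  obtain ⟨j, rfl⟩ : ∃ j, i = j + 1 := ⟨i - 1, by omega⟩
  have hjn : j < n := hin
  rw [Nat.add_sub_cancel]
  have hulo_nonneg : 0 ≤ ulo j := hu0.1 ▸ apply_zero_le_of_le_succ_s8 hulo hjn.le
  have hvlo_nonneg : 0 ≤ vlo j := hv0.1 ▸ apply_zero_le_of_le_succ_s8 hvlo hjn.le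
  exact iadd_imul_gH_eq_gH_imul hulo_nonneg (huvalid j hjn.le) hvlo_nonneg (hvvalid j hjn.le)
    (hulo j hjn) (hvlo j hjn) (hulen j hjn) (hvlen j hjn)

theorem interval_leibniz_identity
    (n : ℕ) (ulo uhi vlo vhi : ℕ → ℝ)
    (huvalid : ∀ i ≤ n, ulo i ≤ uhi i)
    (hvvalid : ∀ i ≤ n, vlo i ≤ vhi i)
    (hu0 : ulo 0 = 0 ∧ uhi 0 = 0) (hv0 : vlo 0 = 0 ∧ vhi 0 = 0)
    (hulo : ∀ i < n, ulo i ≤ ulo (i + 1))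
    (huhi : ∀ i < n, uhi i ≤ uhi (i + 1))
    (hvlo : ∀ i < n, vlo i ≤ vlo (i + 1))
    (hvhi : ∀ i < n, vhi i ≤ vhi (i + 1))
    (hulen : ∀ i < n, uhi i - ulo i ≤ uhi (i + 1) - ulo (i + 1))
    (hvlen : ∀ i < n, vhi i - vlo i ≤ vhi (i + 1) - vlo (i + 1)) :
    ∀ i, 1 ≤ i → i ≤ n →
      iadd (imul (ulo (i - 1), uhi (i - 1)) (gH (vlo i, vhi i) (vlo (i - 1), vhi (i - 1))))
           (imul (vlo i, vhi i) (gH (ulo i, uhi i) (ulo (i - 1), uhi (i - 1))))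
        = gH (imul (ulo i, uhi i) (vlo i, vhi i))
             (imul (ulo (i - 1), uhi (i - 1)) (vlo (i - 1), vhi (i - 1))) :=
  interval_leibniz_identity_general n ulo uhi vlo vhi huvalid hvvalid hu0 hv0 hulo hvlo hulen hvlen
end

section
/- Let $\{u_i\}_{i=0}^{m}$ be a sequence of real numbers with $u_0 = u_m = 0$, and let $\lambda_1, \lambda_2 \geq 1$ be real numbers. Then $\sum_{i=1}^{m-1} |u_i|^{\lambda_1} |u_i - u_{i-1}|^{\lambda_2} \leq \frac{\lambda_2 (\lfloor m/2 \rfloor + 1)^{\lambda_1}}{\lambda_1 + \lambda_2} \sum_{i=1}^{m} |u_i - u_{i-1}|^{\lambda_1 + \lambda_2}$. -/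
/-!
Write `p = l1 + l2` and `B i = ∑_{j ≤ i} |∇u_j|^p`. If `u 0 = 0`, then `|u i| ≤ ∑_{j ≤ i} |∇u_j|`
and the power-mean inequality give `|u i|^p ≤ i^(p-1) B i`. Young's inequality with the weight
`ψ(i) = c + i^p / l2` bounds `|u i|^l1 |∇u_i|^l2` by `l2/p · (Φ'(i) B i + Φ(i) |∇u_i|^p)`, where
`Φ = ψ^(l1/p)`; since `Φ'` is increasing, `Φ'(i) ≤ Φ(i+1) - Φ(i)`, so the terms telescope to
`l2/p · Φ(k+1) B k`, and `c = (1 - 1/l2)(k+1)^p` makes `Φ(k+1) = (k+1)^l1`.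
On `(⌊m/2⌋, m)` the same estimate is applied to `i ↦ u (m - i)`, which vanishes at `0`; there
`|u i|` is paired with the next difference, which still telescopes because `Φ` is increasing, and
`m - ⌊m/2⌋ ≤ ⌊m/2⌋ + 1`.
-/

open Finset Real

section Sums

variable {M : Type*} [AddCommGroup M]

lemma sum_Icc_one_sub_pred (f : ℕ → M) (k : ℕ) :
    ∑ i ∈ Icc 1 k, (f i - f (i - 1)) = f k - f 0 := by
  induction k with
  | zero => simp
  | succ n ih => rw [sum_Icc_succ_top (by omega), ih, add_tsub_cancel_right, sub_add_sub_cancel']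

lemma sum_Icc_one_eq_add_sum_Icc (f : ℕ → M) {k n : ℕ} (hkn : k ≤ n) :
    ∑ i ∈ Icc 1 n, f i = ∑ i ∈ Icc 1 k, f i + ∑ i ∈ Icc (k + 1) n, f i := by
  have h := sum_Ioc_consecutive f (Nat.zero_le k) hkn
  rwa [← Icc_add_one_left_eq_Ioc, ← Icc_add_one_left_eq_Ioc, ← Icc_add_one_left_eq_Ioc, zero_add,
    eq_comm] at h

lemma sum_Icc_reflect (f : ℕ → M) {a b n : ℕ} (ha : a ≤ n) (hb : b ≤ n) :
    ∑ i ∈ Icc a b, f (n - i) = ∑ i ∈ Icc (n - b) (n - a), f i := by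
  refine sum_nbij' (n - ·) (n - ·) ?_ ?_ ?_ ?_ fun i _ => rfl <;>
    intro i hi <;> simp only [mem_Icc] at hi ⊢ <;> omega

end Sums

lemma abs_rpow_le_mul_sum_abs_sub_rpow {u : ℕ → ℝ} (h0 : u 0 = 0) {p : ℝ} (hp : 1 ≤ p) (i : ℕ) :
    |u i| ^ p ≤ (i : ℝ) ^ (p - 1) * ∑ j ∈ Icc 1 i, |u j - u (j - 1)| ^ p := by
  have hsum : |u i| ≤ ∑ j ∈ Icc 1 i, |u j - u (j - 1)| := by
    have h := abs_sum_le_sum_abs (fun j => u j - u (j - 1)) (Icc 1 i)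
    rwa [sum_Icc_one_sub_pred, h0, sub_zero] at h
  calc |u i| ^ p ≤ (∑ j ∈ Icc 1 i, |u j - u (j - 1)|) ^ p :=
        rpow_le_rpow (abs_nonneg _) hsum (by linarith)
    _ ≤ _ := by
        simpa using rpow_sum_le_const_mul_sum_rpow_of_nonneg (Icc 1 i) hp fun j _ => abs_nonneg _

lemma rpow_mul_rpow_le_weighted {l1 l2 x y w : ℝ} (hl1 : 0 ≤ l1) (hl2 : 0 < l2)
    (hx : 0 ≤ x) (hy : 0 ≤ y) (hw : 0 < w) :
    x ^ l1 * y ^ l2 ≤ l1 / (l1 + l2) * (x ^ (l1 + l2) * w ^ (-(l2 / (l1 + l2))))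
      + l2 / (l1 + l2) * (y ^ (l1 + l2) * w ^ (l1 / (l1 + l2))) := by
  have hp : 0 < l1 + l2 := by linarith
  refine le_of_eq_of_le ?_ (geom_mean_le_arith_mean2_weighted (by positivity) (by positivity)
    (by positivity) (by positivity) (by field_simp))
  rw [mul_rpow (by positivity) (by positivity), mul_rpow (by positivity) (by positivity),
    ← rpow_mul hx, ← rpow_mul hy, ← rpow_mul hw.le, ← rpow_mul hw.le]
  have hcancel : w ^ (-(l2 / (l1 + l2)) * (l1 / (l1 + l2)))
      * w ^ (l1 / (l1 + l2) * (l2 / (l1 + l2))) = 1 := by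
    rw [← rpow_add hw, neg_mul, mul_comm (l1 / _), neg_add_cancel, rpow_zero]
  rw [mul_div_cancel₀ _ hp.ne', mul_div_cancel₀ _ hp.ne']
  linear_combination (-(x ^ l1 * y ^ l2)) * hcancel

noncomputable def opialPotential (l1 l2 c t : ℝ) : ℝ :=
  (c + t ^ (l1 + l2) / l2) ^ (l1 / (l1 + l2))

section OpialPotential

variable {l1 l2 c : ℝ}

lemma hasDerivAt_opialPotential (hl1 : 0 ≤ l1) (hl2 : 0 < l2) (hc : 0 ≤ c) {t : ℝ} (ht : 0 < t) :
    HasDerivAt (opialPotential l1 l2 c)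
      (l1 / l2 * (t ^ (l1 + l2 - 1) * (c + t ^ (l1 + l2) / l2) ^ (-(l2 / (l1 + l2))))) t := by
  have hp : l1 + l2 ≠ 0 := by positivity
  have hψ : c + t ^ (l1 + l2) / l2 ≠ 0 := by positivity
  show HasDerivAt (fun t => (c + t ^ (l1 + l2) / l2) ^ (l1 / (l1 + l2))) _ t
  convert (((hasDerivAt_rpow_const (p := l1 + l2) (Or.inl ht.ne')).div_const l2).const_add
    c).rpow_const (p := l1 / (l1 + l2)) (Or.inl hψ) using 1
  have hexp : l1 / (l1 + l2) - 1 = -(l2 / (l1 + l2)) := by field_simp; ring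
  rw [hexp]
  field_simp

lemma monotoneOn_opialPotential_deriv (hl1 : 1 ≤ l1) (hl2 : 0 < l2) (hc : 0 ≤ c) :
    MonotoneOn (fun t => t ^ (l1 + l2 - 1) * (c + t ^ (l1 + l2) / l2) ^ (-(l2 / (l1 + l2))))
      (Set.Ioi 0) := by
  have hp : 0 < l1 + l2 := by linarith
  -- pulling `t ^ (l1 + l2)` out of the base leaves a product of two monotone factors
  have hform : ∀ t : ℝ, 0 < t → t ^ (l1 + l2 - 1) * (c + t ^ (l1 + l2) / l2) ^ (-(l2 / (l1 + l2)))
      = t ^ (l1 - 1) * (c / t ^ (l1 + l2) + 1 / l2) ^ (-(l2 / (l1 + l2))) := by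
    intro t ht
    have hbase : c + t ^ (l1 + l2) / l2 = t ^ (l1 + l2) * (c / t ^ (l1 + l2) + 1 / l2) := by
      field_simp
    rw [hbase, mul_rpow (by positivity) (by positivity), ← rpow_mul ht.le, ← mul_assoc,
      ← rpow_add ht]
    congr 2
    field_simp
    ring
  intro s hs t ht hst
  dsimp only
  rw [hform s hs, hform t ht]
  have hs' : (0 : ℝ) < s := hs
  have ht' : (0 : ℝ) < t := ht
  refine mul_le_mul (rpow_le_rpow hs'.le hst (by linarith))
    (rpow_le_rpow_of_nonpos (by positivity) ?_ (neg_nonpos.mpr (by positivity)))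
    (by positivity) (by positivity)
  gcongr

lemma opialPotential_deriv_le_sub (hl1 : 1 ≤ l1) (hl2 : 0 < l2) (hc : 0 ≤ c) {t : ℝ}
    (ht : 0 < t) :
    l1 / l2 * (t ^ (l1 + l2 - 1) * (c + t ^ (l1 + l2) / l2) ^ (-(l2 / (l1 + l2))))
      ≤ opialPotential l1 l2 c (t + 1) - opialPotential l1 l2 c t := by
  have hder {s : ℝ} (hs : t ≤ s) :=
    hasDerivAt_opialPotential (l1 := l1) (c := c) (by linarith) hl2 hc (ht.trans_le hs)
  have hmvt := (convex_Icc t (t + 1)).mul_sub_le_image_sub_of_le_deriv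
    (fun s hs => (hder hs.1).continuousAt.continuousWithinAt)
    (fun s hs => by
      rw [interior_Icc] at hs
      exact (hder hs.1.le).differentiableAt.differentiableWithinAt)
    (fun s hs => by
      rw [interior_Icc] at hs
      rw [(hder hs.1.le).deriv]
      exact mul_le_mul_of_nonneg_left
        (monotoneOn_opialPotential_deriv hl1 hl2 hc ht (ht.trans hs.1) hs.1.le) (by positivity))
    t (Set.left_mem_Icc.2 (lt_add_one t).le) (t + 1) (Set.right_mem_Icc.2 (lt_add_one t).le)
    (lt_add_one t).le
  simpa using hmvt

lemma rpow_mul_rpow_le_opialPotential (hl1 : 1 ≤ l1) (hl2 : 0 < l2) (hc : 0 ≤ c)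
    {t S B y : ℝ} (ht : 0 < t) (hS : 0 ≤ S) (hy : 0 ≤ y)
    (hSB : S ^ (l1 + l2) ≤ t ^ (l1 + l2 - 1) * B) :
    S ^ l1 * y ^ l2 ≤ l2 / (l1 + l2) *
      ((opialPotential l1 l2 c (t + 1) - opialPotential l1 l2 c t) * B
        + opialPotential l1 l2 c t * y ^ (l1 + l2)) := by
  have hp : 0 < l1 + l2 := by linarith
  have hstep := opialPotential_deriv_le_sub hl1 hl2 hc ht
  set ψ := c + t ^ (l1 + l2) / l2
  have hψ_pos : 0 < ψ := by positivity
  have hB : 0 ≤ B := nonneg_of_mul_nonneg_right ((rpow_nonneg hS _).trans hSB) (by positivity)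
  calc S ^ l1 * y ^ l2
      ≤ l1 / (l1 + l2) * (S ^ (l1 + l2) * ψ ^ (-(l2 / (l1 + l2))))
        + l2 / (l1 + l2) * (y ^ (l1 + l2) * opialPotential l1 l2 c t) :=
        rpow_mul_rpow_le_weighted (by linarith) hl2 hS hy hψ_pos
    _ ≤ l1 / (l1 + l2) * (t ^ (l1 + l2 - 1) * B * ψ ^ (-(l2 / (l1 + l2))))
        + l2 / (l1 + l2) * (y ^ (l1 + l2) * opialPotential l1 l2 c t) := by gcongr
    _ = l2 / (l1 + l2) * (l1 / l2 * (t ^ (l1 + l2 - 1) * ψ ^ (-(l2 / (l1 + l2)))) * B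
        + opialPotential l1 l2 c t * y ^ (l1 + l2)) := by field_simp
    _ ≤ _ := by gcongr

lemma opialPotential_le_add_one (hl1 : 1 ≤ l1) (hl2 : 0 < l2) (hc : 0 ≤ c) {t : ℝ} (ht : 0 < t) :
    opialPotential l1 l2 c t ≤ opialPotential l1 l2 c (t + 1) := by
  have hl1' : 0 ≤ l1 := by linarith
  exact sub_nonneg.1 (le_trans (by positivity) (opialPotential_deriv_le_sub hl1 hl2 hc ht))

lemma opialPotential_self {K : ℝ} (hl2 : l2 ≠ 0) (hp : l1 + l2 ≠ 0) (hK : 0 ≤ K) :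
    opialPotential l1 l2 ((1 - 1 / l2) * K ^ (l1 + l2)) K = K ^ l1 := by
  have hbase : (1 - 1 / l2) * K ^ (l1 + l2) + K ^ (l1 + l2) / l2 = K ^ (l1 + l2) := by
    field_simp; ring
  rw [opialPotential, hbase, ← rpow_mul hK, mul_div_cancel₀ _ hp]

end OpialPotential

section DiscreteOpial

variable {l1 l2 : ℝ}

lemma discrete_opial_left (hl1 : 1 ≤ l1) (hl2 : 1 ≤ l2) {u : ℕ → ℝ} (h0 : u 0 = 0) (k : ℕ) :
    ∑ i ∈ Icc 1 k, |u i| ^ l1 * |u i - u (i - 1)| ^ l2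
      ≤ l2 * ((k : ℝ) + 1) ^ l1 / (l1 + l2) * ∑ i ∈ Icc 1 k, |u i - u (i - 1)| ^ (l1 + l2) := by
  have hp : 0 < l1 + l2 := by linarith
  set c := (1 - 1 / l2) * ((k : ℝ) + 1) ^ (l1 + l2)
  have hc : 0 ≤ c := mul_nonneg (by rw [sub_nonneg]; exact div_le_one_of_le₀ hl2 (by linarith))
    (by positivity)
  set B : ℕ → ℝ := fun n => ∑ j ∈ Icc 1 n, |u j - u (j - 1)| ^ (l1 + l2)
  set F : ℕ → ℝ := fun n => l2 / (l1 + l2) * (opialPotential l1 l2 c ((n : ℝ) + 1) * B n)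
  have hstep (i : ℕ) (hi : i ∈ Icc 1 k) :
      |u i| ^ l1 * |u i - u (i - 1)| ^ l2 ≤ F i - F (i - 1) := by
    obtain ⟨n, rfl⟩ : ∃ n, i = n + 1 := ⟨i - 1, by simp only [mem_Icc] at hi; omega⟩
    have hB : B (n + 1) = B n + |u (n + 1) - u n| ^ (l1 + l2) := by
      simp only [B, sum_Icc_succ_top (Nat.le_add_left 1 n), add_tsub_cancel_right]
    have hcore := rpow_mul_rpow_le_opialPotential hl1 (by linarith : (0 : ℝ) < l2) hc
      (t := (n : ℝ) + 1) (B := B (n + 1)) (by positivity) (abs_nonneg _)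
      (abs_nonneg (u (n + 1) - u n))
      (by exact_mod_cast abs_rpow_le_mul_sum_abs_sub_rpow h0 (by linarith : 1 ≤ l1 + l2) (n + 1))
    refine hcore.trans_eq ?_
    simp only [F, hB, add_tsub_cancel_right, Nat.cast_add, Nat.cast_one]
    ring
  have hK : opialPotential l1 l2 c ((k : ℝ) + 1) = ((k : ℝ) + 1) ^ l1 :=
    opialPotential_self (by linarith) hp.ne' (by positivity)
  calc ∑ i ∈ Icc 1 k, |u i| ^ l1 * |u i - u (i - 1)| ^ l2
      ≤ ∑ i ∈ Icc 1 k, (F i - F (i - 1)) := sum_le_sum hstep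
    _ = F k - F 0 := sum_Icc_one_sub_pred F k
    _ = _ := by
      simp only [F, B, hK, Icc_eq_empty_of_lt zero_lt_one, sum_empty, mul_zero, sub_zero]
      ring

lemma discrete_opial_left_shifted (hl1 : 1 ≤ l1) (hl2 : 1 ≤ l2) {u : ℕ → ℝ} (h0 : u 0 = 0) (k : ℕ) :
    ∑ i ∈ Icc 1 k, |u i| ^ l1 * |u (i + 1) - u i| ^ l2
      ≤ l2 * ((k : ℝ) + 1) ^ l1 / (l1 + l2) *
        ∑ i ∈ Icc 1 (k + 1), |u i - u (i - 1)| ^ (l1 + l2) := by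
  have hp : 0 < l1 + l2 := by linarith
  set c := (1 - 1 / l2) * ((k : ℝ) + 1) ^ (l1 + l2)
  have hc : 0 ≤ c := mul_nonneg (by rw [sub_nonneg]; exact div_le_one_of_le₀ hl2 (by linarith))
    (by positivity)
  set B : ℕ → ℝ := fun n => ∑ j ∈ Icc 1 n, |u j - u (j - 1)| ^ (l1 + l2)
  set F : ℕ → ℝ := fun n => l2 / (l1 + l2) * (opialPotential l1 l2 c ((n : ℝ) + 1) * B (n + 1))
  have hstep (i : ℕ) (hi : i ∈ Icc 1 k) :
      |u i| ^ l1 * |u (i + 1) - u i| ^ l2 ≤ F i - F (i - 1) := by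
    obtain ⟨n, rfl⟩ : ∃ n, i = n + 1 := ⟨i - 1, by simp only [mem_Icc] at hi; omega⟩
    have hB : B (n + 2) = B (n + 1) + |u (n + 2) - u (n + 1)| ^ (l1 + l2) := by
      simp only [B, sum_Icc_succ_top (Nat.le_add_left 1 (n + 1)), add_tsub_cancel_right]
    have hcore := rpow_mul_rpow_le_opialPotential hl1 (by linarith : (0 : ℝ) < l2) hc
      (t := (n : ℝ) + 1) (B := B (n + 1)) (by positivity) (abs_nonneg _)
      (abs_nonneg (u (n + 2) - u (n + 1)))
      (by exact_mod_cast abs_rpow_le_mul_sum_abs_sub_rpow h0 (by linarith : 1 ≤ l1 + l2) (n + 1))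
    have hmono := opialPotential_le_add_one hl1 (by linarith : (0 : ℝ) < l2) hc
      (by positivity : (0 : ℝ) < (n : ℝ) + 1)
    have hgain : 0 ≤ l2 / (l1 + l2) * ((opialPotential l1 l2 c ((n : ℝ) + 1 + 1)
        - opialPotential l1 l2 c ((n : ℝ) + 1)) * |u (n + 2) - u (n + 1)| ^ (l1 + l2)) :=
      mul_nonneg (by positivity) (mul_nonneg (sub_nonneg.2 hmono) (by positivity))
    simp only [F, hB, add_tsub_cancel_right, Nat.cast_add, Nat.cast_one]
    linarith
  have hK : opialPotential l1 l2 c ((k : ℝ) + 1) = ((k : ℝ) + 1) ^ l1 :=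
    opialPotential_self (by linarith) hp.ne' (by positivity)
  have hF0 : 0 ≤ F 0 := mul_nonneg (by positivity)
    (mul_nonneg (by unfold opialPotential; positivity) (sum_nonneg fun j _ => by positivity))
  calc ∑ i ∈ Icc 1 k, |u i| ^ l1 * |u (i + 1) - u i| ^ l2
      ≤ ∑ i ∈ Icc 1 k, (F i - F (i - 1)) := sum_le_sum hstep
    _ = F k - F 0 := sum_Icc_one_sub_pred F k
    _ ≤ F k := sub_le_self _ hF0
    _ = _ := by
      simp only [F, B, hK]
      ring

lemma discrete_opial_right (hl1 : 1 ≤ l1) (hl2 : 1 ≤ l2) {u : ℕ → ℝ} {m k : ℕ} (hm : u m = 0)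
    (hkm : k < m) :
    ∑ i ∈ Icc (k + 1) (m - 1), |u i| ^ l1 * |u i - u (i - 1)| ^ l2
      ≤ l2 * ((m - k : ℕ) : ℝ) ^ l1 / (l1 + l2) *
        ∑ i ∈ Icc (k + 1) m, |u i - u (i - 1)| ^ (l1 + l2) := by
  set v : ℕ → ℝ := fun i => u (m - i)
  have hv := discrete_opial_left_shifted hl1 hl2 (u := v) (by simp only [v, Nat.sub_zero, hm])
    (m - k - 1)
  have hlhs : ∑ i ∈ Icc (k + 1) (m - 1), |u i| ^ l1 * |u i - u (i - 1)| ^ l2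
      = ∑ r ∈ Icc 1 (m - k - 1), |v r| ^ l1 * |v (r + 1) - v r| ^ l2 := by
    rw [show k + 1 = m - (m - k - 1) by omega, ← sum_Icc_reflect _ (by omega) (by omega)]
    refine sum_congr rfl fun r _ => ?_
    rw [abs_sub_comm, Nat.sub_sub]
  have hrhs : ∑ r ∈ Icc 1 (m - k - 1 + 1), |v r - v (r - 1)| ^ (l1 + l2)
      = ∑ i ∈ Icc (k + 1) m, |u i - u (i - 1)| ^ (l1 + l2) := by
    rw [show Icc (k + 1) m = Icc (m + 1 - (m - k - 1 + 1)) (m + 1 - 1) by congr 1; omega,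
      ← sum_Icc_reflect _ (by omega) (by omega)]
    refine sum_congr rfl fun r hr => ?_
    simp only [mem_Icc] at hr
    dsimp only [v]
    rw [abs_sub_comm, show m - (r - 1) = m + 1 - r by omega, show m - r = m + 1 - r - 1 by omega]
  have hq : ((m - k - 1 : ℕ) : ℝ) + 1 = ((m - k : ℕ) : ℝ) := by
    exact_mod_cast (show m - k - 1 + 1 = m - k by omega)
  rw [hlhs, ← hrhs, ← hq]
  exact hv

end DiscreteOpial

theorem discrete_opial_two_sided (m : ℕ) (u : ℕ → ℝ) (l1 l2 : ℝ)
    (hl1 : 1 ≤ l1) (hl2 : 1 ≤ l2)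
    (h0 : u 0 = 0) (hm : u m = 0) :
    ∑ i ∈ Finset.Icc 1 (m - 1), |u i| ^ l1 * |u i - u (i - 1)| ^ l2
      ≤ (l2 * ((m / 2 : ℕ) + 1 : ℝ) ^ l1) / (l1 + l2) *
        ∑ i ∈ Finset.Icc 1 m, |u i - u (i - 1)| ^ (l1 + l2) := by
  rcases Nat.eq_zero_or_pos m with rfl | hm_pos
  · simp
  set k := m / 2
  rw [sum_Icc_one_eq_add_sum_Icc _ (show k ≤ m - 1 by omega),
    sum_Icc_one_eq_add_sum_Icc _ (show k ≤ m by omega), mul_add]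
  refine add_le_add (discrete_opial_left hl1 hl2 h0 k)
    ((discrete_opial_right hl1 hl2 hm (show k < m by omega)).trans ?_)
  gcongr
  exact_mod_cast (show m - k ≤ k + 1 by omega)
end

section
/- Let $\{u_i\}_{i=0}^{m}$ be a sequence of closed bounded intervals with $u_0 = u_m = [0,0]$, and let $\lambda_1, \lambda_2 \geq 1$ be natural numbers. Suppose there exists an index $k$ with $1 \le k \le m-1$ such that on $\{0,\ldots,k\}$ both endpoint sequences of $u_i$ are non-decreasing and $\mathrm{len}(u_i)$ is non-decreasing, while on $\{k,\ldots,m\}$ both endpoint sequences are non-increasing and $\mathrm{len}(u_i)$ is non-increasing. Then $\sum_{i=1}^{m-1} \|u_i^{\lambda_1}(\nabla u_i)^{\lambda_2}\| \leq \frac{\lambda_2 (\lfloor m/2 \rfloor + 1)^{\lambda_1}}{\lambda_1 + \lambda_2} \sum_{i=1}^{m} \|\nabla u_i\|^{\lambda_1 + \lambda_2}$. -/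
/-- Power of an interval, as the image interval `{t^k : t ∈ u}`. -/
noncomputable def ipowI (u : ℝ × ℝ) (k : ℕ) : ℝ × ℝ :=
  (sInf ((fun t : ℝ => t ^ k) '' Set.Icc u.1 u.2),
   sSup ((fun t : ℝ => t ^ k) '' Set.Icc u.1 u.2))

/-- Quasi-norm of an interval. -/
def inorm (u : ℝ × ℝ) : ℝ := max |u.1| |u.2|


/-!
`inorm` is the sup norm of `ℝ × ℝ` and `inorm (gH u v) = ‖u - v‖`, so each summand is at most
`‖u i‖ ^ p * ‖u i - u (i - 1)‖ ^ q`: it suffices to prove a discrete Opial inequality for a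
sequence in a normed group vanishing at `0` and `m`. For `i ≤ m / 2`, `‖u i‖` is bounded by the
partial sum `L i` of the increment norms `σ j` from the left; beyond `m / 2`, from the right, which
after reversing the sequence shifts the index of the weight by one. For each term, the power-mean
inequality `L i ^ (p + q) ≤ i ^ (p + q - 1) * ∑ j ≤ i, σ j ^ (p + q)` and Young's inequality give
`(p + q) L^p σ^q ≤ p i^(p-1) ∑ j ≤ i, σ j^(p+q) + q i^p σ^(p+q)`; summation by parts with
`p i^(p-1) ≤ (i+1)^p - i^p` then collects every coefficient of `σ j^(p+q)` into `q (n+1)^p`.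
-/

open Finset

lemma natCast_mul_pow_pred_le_add_one_pow_sub_pow {x : ℝ} (hx : 0 ≤ x) (n : ℕ) :
    n * x ^ (n - 1) ≤ (x + 1) ^ n - x ^ n := by
  rw [← geom_sum₂_mul, add_sub_cancel_left, mul_one]
  calc (n : ℝ) * x ^ (n - 1) = ∑ i ∈ range n, x ^ i * x ^ (n - 1 - i) := by
        rw [sum_congr rfl fun i hi => by rw [← pow_add, Nat.add_sub_cancel' (by simp at hi; omega)]]
        simp
    _ ≤ ∑ i ∈ range n, (x + 1) ^ i * x ^ (n - 1 - i) := by gcongr; linarith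

lemma sum_pow_pred_mul_sum_Icc_le (p : ℕ) {a : ℕ → ℝ} (ha : ∀ j, 0 ≤ a j) (n : ℕ) :
    ∑ i ∈ Icc 1 n, (p : ℝ) * (i : ℝ) ^ (p - 1) * ∑ j ∈ Icc 1 i, a j ≤
      ((n : ℝ) + 1) ^ p * ∑ j ∈ Icc 1 n, a j - ∑ i ∈ Icc 1 n, (i : ℝ) ^ p * a i := by
  induction n with
  | zero => simp
  | succ n ih =>
    have h1 : 1 ≤ n + 1 := by omega
    have hbern := mul_le_mul_of_nonneg_right
      (natCast_mul_pow_pred_le_add_one_pow_sub_pow (by positivity : (0 : ℝ) ≤ n + 1) p)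
      (sum_nonneg fun j _ => ha j : 0 ≤ ∑ j ∈ Icc 1 (n + 1), a j)
    simp only [sum_Icc_succ_top h1] at hbern ⊢
    push_cast at hbern ⊢
    linarith

lemma add_mul_pow_mul_pow_le (p q : ℕ) {x y : ℝ} (hx : 0 ≤ x) (hy : 0 ≤ y) :
    ((p : ℝ) + q) * (x ^ p * y ^ q) ≤ p * x ^ (p + q) + q * y ^ (p + q) := by
  obtain hpq | hpq := (p + q).eq_zero_or_pos
  · obtain ⟨rfl, rfl⟩ : p = 0 ∧ q = 0 := by omega
    simp
  have hpq' : (0 : ℝ) < p + q := by exact_mod_cast hpq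
  have hroot (z : ℝ) (hz : 0 ≤ z) (k : ℕ) : (z ^ (p + q)) ^ ((k : ℝ) / (p + q)) = z ^ k := by
    rw [← Real.rpow_natCast z (p + q), ← Real.rpow_mul hz, Nat.cast_add,
      mul_div_cancel₀ _ hpq'.ne', Real.rpow_natCast]
  have h := Real.geom_mean_le_arith_mean2_weighted (w₁ := p / (p + q)) (w₂ := q / (p + q))
    (by positivity) (by positivity) (pow_nonneg hx (p + q)) (pow_nonneg hy (p + q))
    (by field_simp)
  rw [hroot x hx, hroot y hy] at h
  calc ((p : ℝ) + q) * (x ^ p * y ^ q)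
      ≤ (p + q) * (p / (p + q) * x ^ (p + q) + q / (p + q) * y ^ (p + q)) := by gcongr
    _ = p * x ^ (p + q) + q * y ^ (p + q) := by field_simp

lemma sum_Icc_pow_mul_le {a : ℕ → ℝ} (ha : ∀ j, 0 ≤ a j) (p : ℕ) {n N : ℕ} (hN : n ≤ N) :
    ∑ i ∈ Icc 1 n, (i : ℝ) ^ p * a i ≤ (N : ℝ) ^ p * ∑ i ∈ Icc 1 n, a i := by
  rw [mul_sum]
  gcongr with i hi
  · exact ha i
  · exact_mod_cast (mem_Icc.1 hi).2.trans hN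

lemma sum_Ioc_eq_sum_Icc_reflect {M : Type*} [AddCommMonoid M] (f : ℕ → M) (a b : ℕ) :
    ∑ j ∈ Ioc a b, f j = ∑ t ∈ Icc 1 (b - a), f (b + 1 - t) := by
  refine sum_nbij' (fun j => b + 1 - j) (fun t => b + 1 - t) ?_ ?_ ?_ ?_ fun j hj => ?_
  all_goals first
    | (intro j hj; simp only [mem_Ioc, mem_Icc] at *; omega)
    | rw [Nat.sub_sub_self (by simp only [mem_Ioc] at hj; omega)]

lemma norm_le_sum_norm_sub {E : Type*} [SeminormedAddCommGroup E] {x : ℕ → E} (h0 : x 0 = 0)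
    (i : ℕ) : ‖x i‖ ≤ ∑ j ∈ Icc 1 i, ‖x j - x (j - 1)‖ := by
  induction i with
  | zero => simp [h0]
  | succ i ih =>
    rw [sum_Icc_succ_top (by omega), Nat.add_sub_cancel]
    linarith [norm_le_norm_add_norm_sub' (x (i + 1)) (x i)]

namespace DiscreteOpial

variable {p q : ℕ}

lemma term_le (hp : 1 ≤ p) {σ : ℕ → ℝ} (hσ : ∀ j, 0 ≤ σ j) {i : ℕ} (hi : 1 ≤ i) {g y : ℝ}
    (hg₀ : 0 ≤ g) (hg : g ≤ ∑ j ∈ Icc 1 i, σ j) (hy : 0 ≤ y) :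
    ((p : ℝ) + q) * (g ^ p * y ^ q) ≤
      p * (i : ℝ) ^ (p - 1) * ∑ j ∈ Icc 1 i, σ j ^ (p + q) + q * ((i : ℝ) ^ p * y ^ (p + q)) := by
  set L := ∑ j ∈ Icc 1 i, σ j
  have hpowMean : L ^ (p + q) ≤ (i : ℝ) ^ (q + (p - 1)) * ∑ j ∈ Icc 1 i, σ j ^ (p + q) := by
    have h := pow_sum_div_card_le_sum_pow (s := Icc 1 i) (fun j _ => hσ j) (q + (p - 1))
    rwa [show q + (p - 1) + 1 = p + q by omega, Nat.card_Icc, Nat.add_sub_cancel,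
      div_le_iff₀ (by positivity), mul_comm] at h
  -- Young's inequality for `(L, i * y)`, divided by `i ^ q`.
  have hYoung := add_mul_pow_mul_pow_le p q (sum_nonneg fun j _ => hσ j : 0 ≤ L)
    (by positivity : (0 : ℝ) ≤ i * y)
  refine le_of_mul_le_mul_left ?_ (by positivity : (0 : ℝ) < (i : ℝ) ^ q)
  calc (i : ℝ) ^ q * (((p : ℝ) + q) * (g ^ p * y ^ q))
      = ((p : ℝ) + q) * (g ^ p * (i * y) ^ q) := by ring
    _ ≤ ((p : ℝ) + q) * (L ^ p * (i * y) ^ q) := by gcongr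
    _ ≤ p * L ^ (p + q) + q * (i * y) ^ (p + q) := hYoung
    _ ≤ p * ((i : ℝ) ^ (q + (p - 1)) * ∑ j ∈ Icc 1 i, σ j ^ (p + q)) + q * (i * y) ^ (p + q) := by
        gcongr
    _ = (i : ℝ) ^ q * (p * (i : ℝ) ^ (p - 1) * ∑ j ∈ Icc 1 i, σ j ^ (p + q)
          + q * ((i : ℝ) ^ p * y ^ (p + q))) := by
        rw [pow_add, mul_pow, pow_add (i : ℝ) p q]
        ring

lemma sum_weighted_le (hp : 1 ≤ p) {σ g y : ℕ → ℝ} (hσ : ∀ j, 0 ≤ σ j) (hy : ∀ i, 0 ≤ y i) {n : ℕ}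
    (hg : ∀ i ∈ Icc 1 n, 0 ≤ g i ∧ g i ≤ ∑ j ∈ Icc 1 i, σ j) :
    ((p : ℝ) + q) * ∑ i ∈ Icc 1 n, g i ^ p * y i ^ q ≤
      ((n : ℝ) + 1) ^ p * ∑ j ∈ Icc 1 n, σ j ^ (p + q) - ∑ i ∈ Icc 1 n, (i : ℝ) ^ p * σ i ^ (p + q)
        + q * ∑ i ∈ Icc 1 n, (i : ℝ) ^ p * y i ^ (p + q) := by
  calc ((p : ℝ) + q) * ∑ i ∈ Icc 1 n, g i ^ p * y i ^ q
      = ∑ i ∈ Icc 1 n, ((p : ℝ) + q) * (g i ^ p * y i ^ q) := mul_sum _ _ _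
    _ ≤ ∑ i ∈ Icc 1 n, ((p : ℝ) * (i : ℝ) ^ (p - 1) * ∑ j ∈ Icc 1 i, σ j ^ (p + q)
          + q * ((i : ℝ) ^ p * y i ^ (p + q))) :=
        sum_le_sum fun i hi =>
          term_le hp hσ (mem_Icc.1 hi).1 (hg i hi).1 (hg i hi).2 (hy i)
    _ = ∑ i ∈ Icc 1 n, (p : ℝ) * (i : ℝ) ^ (p - 1) * ∑ j ∈ Icc 1 i, σ j ^ (p + q)
          + q * ∑ i ∈ Icc 1 n, (i : ℝ) ^ p * y i ^ (p + q) := by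
        rw [sum_add_distrib, mul_sum]
    _ ≤ _ := add_le_add_left (sum_pow_pred_mul_sum_Icc_le p (fun j => pow_nonneg (hσ j) _) n) _

theorem sum_le (hp : 1 ≤ p) (hq : 1 ≤ q) {σ g : ℕ → ℝ} (hσ : ∀ j, 0 ≤ σ j) {n : ℕ}
    (hg : ∀ i ∈ Icc 1 n, 0 ≤ g i ∧ g i ≤ ∑ j ∈ Icc 1 i, σ j) :
    ((p : ℝ) + q) * ∑ i ∈ Icc 1 n, g i ^ p * σ i ^ q ≤
      q * ((n : ℝ) + 1) ^ p * ∑ j ∈ Icc 1 n, σ j ^ (p + q) := by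
  have h := sum_weighted_le (q := q) hp hσ hσ hg
  have hT := mul_le_mul_of_nonneg_left
    (sum_Icc_pow_mul_le (fun j => pow_nonneg (hσ j) (p + q)) p n.le_succ)
    (by simpa using hq : (0 : ℝ) ≤ q - 1)
  push_cast at hT
  linarith

theorem sum_shift_le (hp : 1 ≤ p) (hq : 1 ≤ q) {σ g : ℕ → ℝ} (hσ : ∀ j, 0 ≤ σ j) {n : ℕ}
    (hg : ∀ i ∈ Icc 1 n, 0 ≤ g i ∧ g i ≤ ∑ j ∈ Icc 1 i, σ j) :
    ((p : ℝ) + q) * ∑ i ∈ Icc 1 n, g i ^ p * σ (i + 1) ^ q ≤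
      q * ((n : ℝ) + 1) ^ p * ∑ j ∈ Icc 1 (n + 1), σ j ^ (p + q) := by
  have h := sum_weighted_le (q := q) hp hσ (fun i => hσ (i + 1)) hg
  have hshift : ∑ i ∈ Icc 1 n, (i : ℝ) ^ p * σ (i + 1) ^ (p + q) ≤
      ∑ j ∈ Icc 1 (n + 1), (j : ℝ) ^ p * σ j ^ (p + q) := by
    calc ∑ i ∈ Icc 1 n, (i : ℝ) ^ p * σ (i + 1) ^ (p + q)
        ≤ ∑ i ∈ Icc 1 n, ((i + 1 : ℕ) : ℝ) ^ p * σ (i + 1) ^ (p + q) := by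
          gcongr with i
          · exact pow_nonneg (hσ _) _
          · exact_mod_cast i.le_succ
      _ = ∑ j ∈ Icc 2 (n + 1), (j : ℝ) ^ p * σ j ^ (p + q) := by
          rw [show Icc 2 (n + 1) = (Icc 1 n).map (addRightEmbedding 1) by
            rw [map_add_right_Icc], sum_map]
          rfl
      _ ≤ ∑ j ∈ Icc 1 (n + 1), (j : ℝ) ^ p * σ j ^ (p + q) :=
          sum_le_sum_of_subset_of_nonneg (Icc_subset_Icc_left (by norm_num)) fun j _ _ =>
            mul_nonneg (by positivity) (pow_nonneg (hσ j) _)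
  have hT := mul_le_mul_of_nonneg_left
    (sum_Icc_pow_mul_le (fun j => pow_nonneg (hσ j) (p + q)) p (le_refl (n + 1)))
    (by simpa using hq : (0 : ℝ) ≤ q - 1)
  have := mul_le_mul_of_nonneg_left hshift (Nat.cast_nonneg (α := ℝ) q)
  simp only [sum_Icc_succ_top (by omega : 1 ≤ n + 1)] at hT this ⊢
  push_cast at hT this ⊢
  linarith

theorem norm_sum_le {E : Type*} [SeminormedAddCommGroup E] (hp : 1 ≤ p) (hq : 1 ≤ q)
    {x : ℕ → E} {m : ℕ} (h0 : x 0 = 0) (hm : x m = 0) :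
    ∑ i ∈ Icc 1 (m - 1), ‖x i‖ ^ p * ‖x i - x (i - 1)‖ ^ q ≤
      ((q : ℝ) * ((m / 2 : ℕ) + 1 : ℝ) ^ p) / ((p : ℝ) + q) *
        ∑ i ∈ Icc 1 m, ‖x i - x (i - 1)‖ ^ (p + q) := by
  obtain rfl | hm₁ := m.eq_zero_or_pos
  · simp
  set r := m / 2
  have hsplit (f : ℕ → ℝ) {n : ℕ} (hn : r ≤ n) :
      ∑ i ∈ Icc 1 n, f i = ∑ i ∈ Icc 1 r, f i + ∑ i ∈ Ioc r n, f i := by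
    simp only [show ∀ k, Icc 1 k = Ioc 0 k from fun k => Icc_add_one_left_eq_Ioc 0 k]
    exact (sum_Ioc_consecutive f r.zero_le hn).symm
  have hleft := sum_le hp hq (σ := fun i => ‖x i - x (i - 1)‖) (g := fun i => ‖x i‖) (n := r)
    (fun _ => norm_nonneg _) fun i _ => ⟨norm_nonneg _, norm_le_sum_norm_sub h0 i⟩
  set y : ℕ → E := fun i => x (m - i)
  have hright := sum_shift_le hp hq (σ := fun i => ‖y i - y (i - 1)‖) (g := fun i => ‖y i‖)
    (n := m - 1 - r) (fun _ => norm_nonneg _)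
    fun i _ => ⟨norm_nonneg _, norm_le_sum_norm_sub (by simp [y, hm]) i⟩
  have hlhs : ∑ i ∈ Ioc r (m - 1), ‖x i‖ ^ p * ‖x i - x (i - 1)‖ ^ q =
      ∑ t ∈ Icc 1 (m - 1 - r), ‖y t‖ ^ p * ‖y (t + 1) - y (t + 1 - 1)‖ ^ q := by
    rw [sum_Ioc_eq_sum_Icc_reflect]
    refine sum_congr rfl fun t ht => ?_
    have ht' := (mem_Icc.1 ht).2
    simp only [y, Nat.add_sub_cancel, show m - 1 + 1 - t = m - t by omega,
      show m - (t + 1) = m - t - 1 by omega]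
    rw [norm_sub_rev (x (m - t - 1))]
  have hrhs : ∑ j ∈ Icc 1 (m - 1 - r + 1), ‖y j - y (j - 1)‖ ^ (p + q) =
      ∑ i ∈ Ioc r m, ‖x i - x (i - 1)‖ ^ (p + q) := by
    rw [sum_Ioc_eq_sum_Icc_reflect, show m - 1 - r + 1 = m - r by omega]
    refine sum_congr rfl fun j hj => ?_
    have hj' := mem_Icc.1 hj
    simp only [y, show m - (j - 1) = m + 1 - j by omega, show m + 1 - j - 1 = m - j by omega]
    rw [norm_sub_rev]
  have hconst : (q : ℝ) * (((m - 1 - r : ℕ) : ℝ) + 1) ^ p *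
      ∑ i ∈ Ioc r m, ‖x i - x (i - 1)‖ ^ (p + q) ≤
        q * ((r : ℝ) + 1) ^ p * ∑ i ∈ Ioc r m, ‖x i - x (i - 1)‖ ^ (p + q) := by
    gcongr
    exact_mod_cast (show m - 1 - r ≤ r by omega)
  rw [← hlhs, hrhs] at hright
  rw [hsplit _ (show r ≤ m - 1 by omega), hsplit _ (show r ≤ m by omega),
    div_mul_eq_mul_div, le_div_iff₀ (by positivity)]
  linarith

end DiscreteOpial

lemma inorm_gH (u v : ℝ × ℝ) : inorm (gH u v) = ‖u - v‖ := by
  rcases le_total (u.1 - v.1) (u.2 - v.2) with h | h <;>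
    simp [inorm, gH, h, Prod.norm_def, max_comm]

lemma inorm_imul_le (u v : ℝ × ℝ) : inorm (imul u v) ≤ inorm u * inorm v := by
  have hmul {a b : ℝ} (ha : |a| ≤ inorm u) (hb : |b| ≤ inorm v) : |a * b| ≤ inorm u * inorm v := by
    rw [abs_mul]
    exact mul_le_mul ha hb (abs_nonneg b) ((abs_nonneg a).trans ha)
  have hu₁ : |u.1| ≤ inorm u := le_max_left _ _
  have hu₂ : |u.2| ≤ inorm u := le_max_right _ _
  have hv₁ : |v.1| ≤ inorm v := le_max_left _ _
  have hv₂ : |v.2| ≤ inorm v := le_max_right _ _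
  have hmax : max (max |u.1 * v.1| |u.1 * v.2|) (max |u.2 * v.1| |u.2 * v.2|) ≤
      inorm u * inorm v :=
    max_le (max_le (hmul hu₁ hv₁) (hmul hu₁ hv₂)) (max_le (hmul hu₂ hv₁) (hmul hu₂ hv₂))
  exact max_le
    ((abs_min_le_max_abs_abs.trans (max_le_max abs_min_le_max_abs_abs abs_min_le_max_abs_abs)).trans
      hmax)
    ((abs_max_le_max_abs_abs.trans (max_le_max abs_max_le_max_abs_abs abs_max_le_max_abs_abs)).trans
      hmax)

lemma inorm_ipowI_le (u : ℝ × ℝ) (n : ℕ) : inorm (ipowI u n) ≤ inorm u ^ n := by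
  set S := (fun t : ℝ => t ^ n) '' Set.Icc u.1 u.2
  have hS : ∀ s ∈ S, |s| ≤ inorm u ^ n := by
    rintro _ ⟨t, ht, rfl⟩
    rw [abs_pow]
    exact pow_le_pow_left₀ (abs_nonneg t) (abs_le_max_abs_abs ht.1 ht.2) n
  have hC : 0 ≤ inorm u ^ n := pow_nonneg (norm_nonneg u) n
  -- `S` is empty when `u.2 < u.1`; the `Real` lemmas below allow for `sInf ∅ = sSup ∅ = 0`.
  have hinf : -(inorm u ^ n) ≤ sInf S :=
    Real.le_sInf (fun s hs => (abs_le.1 (hS s hs)).1) (by linarith)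
  have hsup : sSup S ≤ inorm u ^ n := Real.sSup_le (fun s hs => (abs_le.1 (hS s hs)).2) hC
  have hle : sInf S ≤ sSup S := Real.sInf_le_sSup S
    ⟨_, fun s hs => (abs_le.1 (hS s hs)).1⟩ ⟨_, fun s hs => (abs_le.1 (hS s hs)).2⟩
  exact max_le (abs_le.2 ⟨hinf, hle.trans hsup⟩) (abs_le.2 ⟨hinf.trans hle, hsup⟩)

lemma inorm_imul_ipowI_le (u v : ℝ × ℝ) (p q : ℕ) :
    inorm (imul (ipowI u p) (ipowI v q)) ≤ ‖u‖ ^ p * ‖v‖ ^ q :=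
  (inorm_imul_le _ _).trans
    (mul_le_mul (inorm_ipowI_le u p) (inorm_ipowI_le v q) (norm_nonneg (ipowI v q))
      (pow_nonneg (norm_nonneg u) p))

theorem interval_opial_up_down_general
    (m : ℕ) (lo hi : ℕ → ℝ) (l1 l2 : ℕ)
    (hl1 : 1 ≤ l1) (hl2 : 1 ≤ l2)
    (h0 : lo 0 = 0 ∧ hi 0 = 0) (hmend : lo m = 0 ∧ hi m = 0) :
    ∑ i ∈ Finset.Icc 1 (m - 1),
        inorm (imul (ipowI (lo i, hi i) l1)
                    (ipowI (gH (lo i, hi i) (lo (i - 1), hi (i - 1))) l2))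
      ≤ ((l2 : ℝ) * ((m / 2 : ℕ) + 1 : ℝ) ^ l1) / ((l1 : ℝ) + (l2 : ℝ)) *
        ∑ i ∈ Finset.Icc 1 m,
          (inorm (gH (lo i, hi i) (lo (i - 1), hi (i - 1)))) ^ (l1 + l2) := by
  set x : ℕ → ℝ × ℝ := fun i => (lo i, hi i)
  calc _ ≤ ∑ i ∈ Icc 1 (m - 1), ‖x i‖ ^ l1 * ‖x i - x (i - 1)‖ ^ l2 :=
        sum_le_sum fun i _ => by
          rw [← inorm_gH]
          exact inorm_imul_ipowI_le _ _ _ _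
    _ ≤ _ := DiscreteOpial.norm_sum_le hl1 hl2 (Prod.ext h0.1 h0.2) (Prod.ext hmend.1 hmend.2)
    _ = _ := by simp only [x, inorm_gH]

theorem interval_opial_up_down
    (m : ℕ) (lo hi : ℕ → ℝ) (l1 l2 : ℕ)
    (hl1 : 1 ≤ l1) (hl2 : 1 ≤ l2)
    (hvalid : ∀ i ≤ m, lo i ≤ hi i)
    (h0 : lo 0 = 0 ∧ hi 0 = 0) (hmend : lo m = 0 ∧ hi m = 0)
    (k : ℕ) (hk1 : 1 ≤ k) (hkm : k ≤ m - 1)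
    (hup : ∀ i < k, lo i ≤ lo (i + 1) ∧ hi i ≤ hi (i + 1) ∧
            hi i - lo i ≤ hi (i + 1) - lo (i + 1))
    (hdown : ∀ i, k ≤ i → i < m → lo (i + 1) ≤ lo i ∧ hi (i + 1) ≤ hi i ∧
            hi (i + 1) - lo (i + 1) ≤ hi i - lo i) :
    ∑ i ∈ Finset.Icc 1 (m - 1),
        inorm (imul (ipowI (lo i, hi i) l1)
                    (ipowI (gH (lo i, hi i) (lo (i - 1), hi (i - 1))) l2))
      ≤ ((l2 : ℝ) * ((m / 2 : ℕ) + 1 : ℝ) ^ l1) / ((l1 : ℝ) + (l2 : ℝ)) *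
        ∑ i ∈ Finset.Icc 1 m,
          (inorm (gH (lo i, hi i) (lo (i - 1), hi (i - 1)))) ^ (l1 + l2) :=
  interval_opial_up_down_general m lo hi l1 l2 hl1 hl2 h0 hmend
end

section
/- Let $\{u_i\}_{i=0}^{n}$ be a sequence of real numbers with $u_0 = 0$ and $u_n = 0$. Then $\sum_{i=1}^{n-1} |u_i (u_{i+1} - u_i)| \leq \frac{1}{2}\left\lfloor \frac{n+1}{2} \right\rfloor \sum_{i=0}^{n-1} (u_{i+1} - u_i)^2$. -/
/-!
Since `u` vanishes at both ends, `|u i|` is bounded both by the total variation `∑_{k<i} |Δu_k|`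
before `i` and by the total variation `∑_{i≤k<n} |Δu_k|` after `i`. Use the first bound for
`i ≤ n/2` and the second for `i > n/2`. With `a_k = |Δu_k|` and `S`, `Q` the sum of the `a_k` and
of their squares over a block of `m` consecutive indices, the two resulting double sums are
`(S² - Q)/2` and `(S² + Q)/2`, and Cauchy–Schwarz `S² ≤ m Q` bounds them by `(m - 1)/2 · Q`
and `(m + 1)/2 · Q`; for the two blocks `[0, n/2]` and `(n/2, n)` both factors are at most
`⌊(n+1)/2⌋ / 2`.
-/

open Finset

section Identities

variable {R : Type*} [CommRing R] (a : ℕ → R) {p q : ℕ}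

theorem two_mul_sum_Ico_prefix_mul (hpq : p ≤ q) :
    2 * ∑ i ∈ Ico p q, (∑ k ∈ Ico p i, a k) * a i
      = (∑ i ∈ Ico p q, a i) ^ 2 - ∑ i ∈ Ico p q, a i ^ 2 := by
  induction q, hpq using Nat.le_induction with
  | base => simp
  | succ q hpq ih =>
    rw [sum_Ico_succ_top hpq, sum_Ico_succ_top hpq, sum_Ico_succ_top hpq, mul_add, ih]
    ring

theorem two_mul_sum_Ico_suffix_mul (hpq : p ≤ q) :
    2 * ∑ i ∈ Ico p q, (∑ k ∈ Ico i q, a k) * a i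
      = (∑ i ∈ Ico p q, a i) ^ 2 + ∑ i ∈ Ico p q, a i ^ 2 := by
  have hsuffix : ∀ i ∈ Ico p q, ∑ k ∈ Ico i q, a k = ∑ k ∈ Ico p q, a k - ∑ k ∈ Ico p i, a k := by
    intro i hi
    rw [mem_Ico] at hi
    rw [← sum_Ico_consecutive a hi.1 hi.2.le, add_sub_cancel_left]
  rw [sum_congr rfl fun i hi => by rw [hsuffix i hi]]
  simp only [sub_mul, sum_sub_distrib, ← mul_sum]
  rw [mul_sub, two_mul_sum_Ico_prefix_mul a hpq]
  ring

end Identities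

section Bounds

variable {R : Type*} [CommRing R] [LinearOrder R] [IsStrictOrderedRing R] (a : ℕ → R) {p q : ℕ}

theorem two_mul_sum_Ico_prefix_mul_le (hpq : p ≤ q) :
    2 * ∑ i ∈ Ico p q, (∑ k ∈ Ico p i, a k) * a i
      ≤ (((q - p : ℕ) : R) - 1) * ∑ i ∈ Ico p q, a i ^ 2 := by
  have hcs := sq_sum_le_card_mul_sum_sq (s := Ico p q) (f := a)
  rw [Nat.card_Ico] at hcs
  rw [two_mul_sum_Ico_prefix_mul a hpq, sub_one_mul]
  exact sub_le_sub_right hcs _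

theorem two_mul_sum_Ico_suffix_mul_le (hpq : p ≤ q) :
    2 * ∑ i ∈ Ico p q, (∑ k ∈ Ico i q, a k) * a i
      ≤ (((q - p : ℕ) : R) + 1) * ∑ i ∈ Ico p q, a i ^ 2 := by
  have hcs := sq_sum_le_card_mul_sum_sq (s := Ico p q) (f := a)
  rw [Nat.card_Ico] at hcs
  rw [two_mul_sum_Ico_suffix_mul a hpq, add_one_mul]
  exact add_le_add_left hcs _

end Bounds

theorem abs_sub_le_sum_Ico_abs_sub (u : ℕ → ℝ) {i j : ℕ} (hij : i ≤ j) :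
    |u i - u j| ≤ ∑ k ∈ Ico i j, |u (k + 1) - u k| :=
  (dist_le_Ico_sum_dist u hij).trans_eq (sum_congr rfl fun _ _ => abs_sub_comm _ _)

section OneSided

variable {u : ℕ → ℝ} {p q : ℕ}

theorem discrete_opial_of_eq_zero_left (hpq : p ≤ q) (hp : u p = 0) :
    2 * ∑ i ∈ Ico p q, |u i| * |u (i + 1) - u i|
      ≤ (((q - p : ℕ) : ℝ) - 1) * ∑ i ∈ Ico p q, (u (i + 1) - u i) ^ 2 := by
  calc 2 * ∑ i ∈ Ico p q, |u i| * |u (i + 1) - u i|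
      ≤ 2 * ∑ i ∈ Ico p q, (∑ k ∈ Ico p i, |u (k + 1) - u k|) * |u (i + 1) - u i| := by
        gcongr with i hi
        simpa [hp] using abs_sub_le_sum_Ico_abs_sub u (mem_Ico.1 hi).1
    _ ≤ _ := by
        simpa only [sq_abs] using two_mul_sum_Ico_prefix_mul_le (fun k => |u (k + 1) - u k|) hpq

theorem discrete_opial_of_eq_zero_right (hpq : p ≤ q) (hq : u q = 0) :
    2 * ∑ i ∈ Ico p q, |u i| * |u (i + 1) - u i|
      ≤ (((q - p : ℕ) : ℝ) + 1) * ∑ i ∈ Ico p q, (u (i + 1) - u i) ^ 2 := by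
  calc 2 * ∑ i ∈ Ico p q, |u i| * |u (i + 1) - u i|
      ≤ 2 * ∑ i ∈ Ico p q, (∑ k ∈ Ico i q, |u (k + 1) - u k|) * |u (i + 1) - u i| := by
        gcongr with i hi
        simpa [hq] using abs_sub_le_sum_Ico_abs_sub u (mem_Ico.1 hi).2.le
    _ ≤ _ := by
        simpa only [sq_abs] using two_mul_sum_Ico_suffix_mul_le (fun k => |u (k + 1) - u k|) hpq

end OneSided

theorem classical_discrete_opial (n : ℕ) (u : ℕ → ℝ)
    (h0 : u 0 = 0) (hn : u n = 0) :
    ∑ i ∈ Finset.Icc 1 (n - 1), |u i * (u (i + 1) - u i)|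
      ≤ (1 / 2 : ℝ) * (((n + 1) / 2 : ℕ) : ℝ) *
        ∑ i ∈ Finset.range n, (u (i + 1) - u i) ^ 2 := by
  rcases Nat.eq_zero_or_pos n with rfl | hn_pos
  · simp
  have hm : n / 2 + 1 ≤ n := by omega
  have hLHS : ∑ i ∈ Icc 1 (n - 1), |u i * (u (i + 1) - u i)|
      = ∑ i ∈ Ico 0 (n / 2 + 1), |u i| * |u (i + 1) - u i|
        + ∑ i ∈ Ico (n / 2 + 1) n, |u i| * |u (i + 1) - u i| := by
    rw [sum_Ico_consecutive _ (Nat.zero_le _) hm, sum_eq_sum_Ico_succ_bot hn_pos, h0, abs_zero,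
      zero_mul, zero_add, Icc_sub_one_right_eq_Ico_of_not_isMin (by simpa using hn_pos.ne')]
    exact sum_congr rfl fun i _ => abs_mul _ _
  have hRHS : ∑ i ∈ range n, (u (i + 1) - u i) ^ 2
      = ∑ i ∈ Ico 0 (n / 2 + 1), (u (i + 1) - u i) ^ 2
        + ∑ i ∈ Ico (n / 2 + 1) n, (u (i + 1) - u i) ^ 2 := by
    rw [sum_Ico_consecutive _ (Nat.zero_le _) hm, range_eq_Ico]
  have hfront := discrete_opial_of_eq_zero_left (Nat.zero_le (n / 2 + 1)) h0
  have hback := discrete_opial_of_eq_zero_right hm hn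
  rw [Nat.sub_zero, Nat.cast_add_one, add_sub_cancel_right] at hfront
  rw [← Nat.cast_add_one, show n - (n / 2 + 1) + 1 = (n + 1) / 2 by omega] at hback
  have hhalf : ((n / 2 : ℕ) : ℝ) ≤ (((n + 1) / 2 : ℕ) : ℝ) := by gcongr; omega
  rw [hLHS, hRHS]
  nlinarith [sum_nonneg fun i (_ : i ∈ Ico 0 (n / 2 + 1)) => sq_nonneg (u (i + 1) - u i)]
end
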